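/- arXiv:2603.20776 — 6 statements merged into one kernel-verified Lean document; each statement's English description precedes it below -/
import Mathlib

section
/- There exists a constant C > 0 such that for every ℓ > 0 with ℓ⁻¹ ∈ ℕ the following holds for the step function u ∈ L²([0,1]³; ℝ) defined by u(x) = Σ_{s=0}^{2ℓ⁻¹−1} cos((πℓ/2)(s + 1/2)) · 1_{[sℓ/2, (s+1)ℓ/2)}(x₁): the quantity S(ℓ) := Σ_{k ∈ {0,…,ℓ⁻¹−1}³} [ Var_{B_{ℓ,k}}(u) + Var_{B_{ℓ,k}^{shift}}(u) ] satisfies | S(ℓ) − (π²ℓ²/8) · Var_{[0,1]³}(u) | ≤ C ℓ³ · Var_{[0,1]³}(u). In particular the constant (1−cos πℓ)/(4+1−cos πℓ) in the two-partition localization inequality is optimal to leading order as ℓ → 0. -/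
open MeasureTheory Real

/-- Average of `f` over `A` w.r.t. Lebesgue measure. -/
noncomputable def avg (A : Set (Fin 3 → ℝ)) (f : (Fin 3 → ℝ) → ℝ) : ℝ :=
  ((volume A).toReal)⁻¹ * ∫ x in A, f x

/-- `Var_A(f) = ∫_A |f - ⟨f⟩_A|²`. -/
noncomputable def Var (A : Set (Fin 3 → ℝ)) (f : (Fin 3 → ℝ) → ℝ) : ℝ :=
  ∫ x in A, (f x - avg A f) ^ 2

/-- The cube `B_{ℓ,k} = ∏_i [k_i ℓ, (k_i+1) ℓ]`. -/
def B (ℓ : ℝ) (k : Fin 3 → ℕ) : Set (Fin 3 → ℝ) :=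
  Set.Icc (fun i => (k i : ℝ) * ℓ) (fun i => ((k i : ℝ) + 1) * ℓ)

/-- The shifted box `B_{ℓ,k}^{shift}` for the partition of `[0,1]³` into `m³` boxes. -/
def Bshift (ℓ : ℝ) (m : ℕ) (k : Fin 3 → ℕ) : Set (Fin 3 → ℝ) :=
  Set.Icc (fun i => ((k i : ℝ) + if 0 < k i then (1 : ℝ) / 2 else 0) * ℓ)
    (fun i => ((k i : ℝ) + 1 + if k i < m - 1 then (1 : ℝ) / 2 else 0) * ℓ)

/-- The step function
`u(x) = Σ_{s=0}^{2ℓ⁻¹−1} cos((πℓ/2)(s+1/2)) 1_{[sℓ/2,(s+1)ℓ/2)}(x₁)`. -/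
noncomputable def stepFn (ℓ : ℝ) (m : ℕ) (x : Fin 3 → ℝ) : ℝ :=
  ∑ s ∈ Finset.range (2 * m),
    if x 0 ∈ Set.Ico ((s : ℝ) * ℓ / 2) (((s : ℝ) + 1) * ℓ / 2) then
      Real.cos (π * ℓ / 2 * ((s : ℝ) + 1 / 2))
    else 0

/-!
The function `u` depends on `x₁` only and is constant, with value
`c_s = cos (πℓ/2 · (s + 1/2))`, on the half-cells `[sℓ/2, (s+1)ℓ/2)`. Hence the variance of `u` on a
box whose first side is a run of `n` half-cells is its cross-section times `ℓ/2` times the discrete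
variance `Σ_j (c_{p+j} - mean)²` of the `n` values met. A cube `B_{ℓ,k}` and an interior shifted box
each meet two half-cells, and `c_s - c_{s+1} = 2 sin (πℓ/4) sin (πℓ(s+1)/2)`; since
`Σ_{j<n} sin² (πj/n + α) = n/2`, the cubes contribute `sin² (πℓ/4) / 2` in total and the shifted
boxes the same up to `O(ℓ³)`, the two boundary shifted boxes being `O(ℓ³)` themselves. With
`Var_{[0,1]³}(u) = 1/2` and `sin² (πℓ/4) = π²ℓ²/16 + O(ℓ⁴)` this gives the claim.
-/

open Finset Set

theorem setIntegral_Icc_comp_eval {ι : Type*} [Fintype ι] [DecidableEq ι] {a b : ι → ℝ}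
    (hab : a ≤ b) (i : ι) {f : ℝ → ℝ}
    (hf : AEStronglyMeasurable f (volume.restrict (Icc (a i) (b i)))) :
    ∫ x in Icc a b, f (x i) = (∏ j ∈ univ.erase i, (b j - a j)) * ∫ t in Icc (a i) (b i), f t := by
  have hmap := Measure.pi_map_eval (fun j => volume.restrict (Icc (a j) (b j))) i
  rw [← pi_univ_Icc, volume_pi, Measure.restrict_pi_pi,
    ← integral_map (measurable_pi_apply i).aemeasurable (by rw [hmap]; exact hf.smul_measure _),
    hmap, integral_smul_measure, ENNReal.toReal_prod]
  congr 1
  refine Finset.prod_congr rfl fun j _ => ?_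
  simp [Real.volume_Icc, sub_nonneg.2 (hab j)]

theorem sum_piFinset_fin_three_mul {α R : Type*} [DecidableEq α] [CommSemiring R]
    (t : Fin 3 → Finset α) (f₀ f₁ f₂ : α → R) :
    ∑ k ∈ Fintype.piFinset t, f₀ (k 0) * f₁ (k 1) * f₂ (k 2) =
      (∑ a ∈ t 0, f₀ a) * (∑ a ∈ t 1, f₁ a) * (∑ a ∈ t 2, f₂ a) := by
  simpa [Fin.prod_univ_three] using (prod_univ_sum t ![f₀, f₁, f₂]).symm

theorem sum_cos_two_pi_mul_div_add {n : ℕ} (hn : 2 ≤ n) (α : ℝ) :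
    ∑ j ∈ range n, cos (2 * π * j / n + α) = 0 := by
  have hsin : 0 < sin (π / n) := sin_pos_of_pos_of_lt_pi (by positivity)
    (div_lt_self pi_pos (by exact_mod_cast hn))
  set f : ℕ → ℝ := fun j => sin ((2 * j - 1) * (π / n) + α)
  -- `2 sin (π/n) cos (2πj/n + α)` telescopes, and `f n = f 0` by `2π`-periodicity.
  have htel (j : ℕ) : cos (2 * π * j / n + α) * (2 * sin (π / n)) = f (j + 1) - f j := by
    simp only [f, sin_sub_sin]
    push_cast
    ring_nf
  have hper : f n = f 0 := by
    simp only [f, ← sin_add_two_pi ((2 * ((0 : ℕ) : ℝ) - 1) * (π / n) + α)]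
    congr 1
    field_simp
    ring
  refine (mul_eq_zero.1 ?_).resolve_right (by positivity : 2 * sin (π / n) ≠ 0)
  rw [sum_mul, sum_congr rfl fun j _ => htel j, sum_range_sub, hper, sub_self]

theorem sum_sin_sq_pi_mul_div_add {n : ℕ} (hn : 2 ≤ n) (α : ℝ) :
    ∑ j ∈ range n, sin (π * j / n + α) ^ 2 = n / 2 := by
  have hcos := sum_cos_two_pi_mul_div_add hn (2 * α)
  simp_rw [sin_sq_eq_half_sub, sum_sub_distrib, ← sum_div]
  rw [show ∑ j ∈ range n, cos (2 * (π * j / n + α)) = 0 by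
    rw [← hcos]; exact sum_congr rfl fun j _ => by ring_nf]
  simp

theorem sq_sub_pow_four_div_three_le_sin_sq {x : ℝ} (hx : 0 ≤ x) (hx6 : x ^ 2 ≤ 6) :
    x ^ 2 - x ^ 4 / 3 ≤ sin x ^ 2 := by
  have h := sin_ge_sub_cube hx
  have h0 : 0 ≤ x - x ^ 3 / 6 := by nlinarith
  nlinarith [pow_le_pow_left₀ h0 h 2, pow_nonneg hx 6]

section stepProfile

noncomputable def stepProfile (h : ℝ) (c : ℕ → ℝ) (N : ℕ) (t : ℝ) : ℝ :=
  ∑ s ∈ range N, (Ico (s * h) ((s + 1) * h)).indicator (fun _ => c s) t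

variable {h : ℝ} {c : ℕ → ℝ} {N : ℕ}

theorem measurable_stepProfile : Measurable (stepProfile h c N) :=
  Finset.measurable_sum _ fun _ _ => measurable_const.indicator measurableSet_Ico

theorem stepProfile_eqOn_Ioo (hh : 0 < h) {s : ℕ} (hs : s < N) :
    EqOn (stepProfile h c N) (fun _ => c s) (Ioo (s * h) ((s + 1) * h)) := by
  intro t ht
  rw [stepProfile, Finset.sum_eq_single_of_mem s (mem_range.2 hs),
    indicator_of_mem (Ioo_subset_Ico_self ht)]
  intro s' _ hs'
  refine indicator_of_notMem (fun ht' => hs' ?_) _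
  have h₁ : (s' : ℝ) < s + 1 := lt_of_mul_lt_mul_right (ht'.1.trans_lt ht.2) hh.le
  have h₂ : (s : ℝ) < s' + 1 := lt_of_mul_lt_mul_right (ht.1.le.trans_lt ht'.2) hh.le
  norm_cast at h₁ h₂
  omega

theorem integrableOn_Ioc_comp_stepProfile (hh : 0 < h) {s : ℕ} (hs : s < N) (f : ℝ → ℝ) :
    IntegrableOn (fun t => f (stepProfile h c N t)) (Ioc (s * h) ((s + 1) * h)) :=
  (integrableOn_Ioc_iff_integrableOn_Ioo).2 <|
    (integrableOn_const measure_Ioo_lt_top.ne).congr_fun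
      (fun _ ht => (congrArg f (stepProfile_eqOn_Ioo hh hs ht)).symm) measurableSet_Ioo

theorem integral_Ioc_comp_stepProfile (hh : 0 < h) {s : ℕ} (hs : s < N) (f : ℝ → ℝ) :
    ∫ t in Ioc (s * h) ((s + 1) * h), f (stepProfile h c N t) = h * f (c s) := by
  rw [integral_Ioc_eq_integral_Ioo,
    setIntegral_congr_fun measurableSet_Ioo fun _ ht => congrArg f (stepProfile_eqOn_Ioo hh hs ht),
    setIntegral_const, volume_real_Ioo_of_le (by nlinarith), smul_eq_mul]
  ring

theorem integral_Icc_comp_stepProfile (hh : 0 < h) {p n : ℕ} (hpn : p + n ≤ N) (f : ℝ → ℝ) :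
    ∫ t in Icc (p * h) ((p + n) * h), f (stepProfile h c N t) =
      h * ∑ j ∈ range n, f (c (p + j)) := by
  have hsum := intervalIntegral.sum_integral_adjacent_intervals
    (f := fun t => f (stepProfile h c N t)) (μ := volume) (a := fun j : ℕ => (p + j : ℕ) * h)
    (n := n) fun j hj => by
      rw [intervalIntegrable_iff_integrableOn_Ioc_of_le (by gcongr; omega)]
      simpa [add_assoc] using integrableOn_Ioc_comp_stepProfile (c := c) hh
        (show p + j < N by omega) f
  rw [integral_Icc_eq_integral_Ioc, ← intervalIntegral.integral_of_le (by gcongr; simp),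
    Finset.mul_sum]
  convert hsum.symm using 1
  · simp
  refine Finset.sum_congr rfl fun j hj => ?_
  rw [intervalIntegral.integral_of_le (by gcongr; omega)]
  simpa [add_assoc] using (integral_Ioc_comp_stepProfile (c := c) hh
    (show p + j < N by have := mem_range.1 hj; omega) f).symm

end stepProfile

section blockVar

noncomputable def blockVar (c : ℕ → ℝ) (p n : ℕ) : ℝ :=
  ∑ j ∈ range n, (c (p + j) - (∑ i ∈ range n, c (p + i)) / n) ^ 2

variable (c : ℕ → ℝ) (p : ℕ)

theorem blockVar_one : blockVar c p 1 = 0 := by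
  simp [blockVar]

theorem blockVar_two : blockVar c p 2 = (c p - c (p + 1)) ^ 2 / 2 := by
  simp only [blockVar, sum_range_succ, sum_range_zero, add_zero, zero_add]
  push_cast
  ring

theorem blockVar_le_sum_sq_sub (n : ℕ) (a : ℝ) :
    blockVar c p n ≤ ∑ j ∈ range n, (c (p + j) - a) ^ 2 := by
  rcases n.eq_zero_or_pos with rfl | hn
  · simp [blockVar]
  set μ := (∑ i ∈ range n, c (p + i)) / n
  have hdev : ∑ j ∈ range n, (c (p + j) - μ) = 0 := by
    rw [sum_sub_distrib, sum_const, card_range, nsmul_eq_mul,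
      mul_div_cancel₀ _ (Nat.cast_ne_zero.2 hn.ne'), sub_self]
  calc blockVar c p n
      ≤ ∑ j ∈ range n, (c (p + j) - μ) ^ 2 + 2 * (μ - a) * ∑ j ∈ range n, (c (p + j) - μ) +
          n * (μ - a) ^ 2 := by
        rw [hdev, blockVar]
        nlinarith [sq_nonneg (μ - a), (Nat.cast_nonneg n : (0 : ℝ) ≤ n)]
    _ = ∑ j ∈ range n, ((c (p + j) - μ) ^ 2 + 2 * (μ - a) * (c (p + j) - μ) + (μ - a) ^ 2) := by
        rw [sum_add_distrib, sum_add_distrib, ← mul_sum, sum_const, card_range, nsmul_eq_mul]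
    _ = ∑ j ∈ range n, (c (p + j) - a) ^ 2 := sum_congr rfl fun j _ => by ring

end blockVar

theorem Var_Icc_stepProfile {h : ℝ} {c : ℕ → ℝ} {N p n : ℕ} (hh : 0 < h) (hpn : p + n ≤ N)
    {a b : Fin 3 → ℝ} (hab : a ≤ b) (ha : a 0 = p * h) (hb : b 0 = (p + n) * h) :
    Var (Icc a b) (fun x => stepProfile h c N (x 0)) =
      (b 1 - a 1) * (b 2 - a 2) * h * blockVar c p n := by
  set w := (b 1 - a 1) * (b 2 - a 2)
  have hint (f : ℝ → ℝ) (hf : Continuous f) : ∫ x in Icc a b, f (stepProfile h c N (x 0)) =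
      w * (h * ∑ j ∈ range n, f (c (p + j))) := by
    rw [setIntegral_Icc_comp_eval (f := fun t => f (stepProfile h c N t)) hab 0
      (hf.measurable.comp measurable_stepProfile).aestronglyMeasurable,
      ha, hb, integral_Icc_comp_stepProfile hh hpn, show univ.erase (0 : Fin 3) = {1, 2} by decide,
      prod_pair (by decide)]
  have hvol : volume.real (Icc a b) = w * (h * n) := by
    simpa using hint (fun _ => 1) continuous_const
  have hsum : ∫ x in Icc a b, stepProfile h c N (x 0) = w * (h * ∑ j ∈ range n, c (p + j)) :=
    hint id continuous_id
  set A := avg (Icc a b) (fun x => stepProfile h c N (x 0)) with hA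
  have hsq : Var (Icc a b) (fun x => stepProfile h c N (x 0)) =
      w * (h * ∑ j ∈ range n, (c (p + j) - A) ^ 2) :=
    hint (fun u => (u - A) ^ 2) (by fun_prop)
  rcases eq_or_ne (w * n) 0 with hw | hw
  · rcases mul_eq_zero.1 hw with hw | hn
    · simp [hsq, hw]
    · simp [hsq, blockVar, Nat.cast_eq_zero.1 hn]
  have hmean : A = (∑ i ∈ range n, c (p + i)) / n := by
    rw [hA, avg, ← measureReal_def, hvol, hsum]
    field_simp [(mul_ne_zero_iff.1 hw).1, (mul_ne_zero_iff.1 hw).2]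
  rw [hsq, hmean, blockVar]
  ring

section stepValue

noncomputable def stepValue (ℓ : ℝ) (s : ℕ) : ℝ := cos (π * ℓ / 2 * (s + 1 / 2))

theorem stepFn_eq_stepProfile (ℓ : ℝ) (m : ℕ) :
    stepFn ℓ m = fun x => stepProfile (ℓ / 2) (stepValue ℓ) (2 * m) (x 0) := by
  funext x
  simp only [stepFn, stepProfile, indicator_apply, stepValue, mul_div_assoc]

variable {ℓ : ℝ} {m : ℕ}

theorem stepValue_sub_succ (ℓ : ℝ) (s : ℕ) :
    stepValue ℓ s - stepValue ℓ (s + 1) = 2 * sin (π * ℓ / 4) * sin (π * ℓ * (s + 1) / 2) := by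
  simp only [stepValue, cos_sub_cos]
  push_cast
  rw [show π * ℓ / 2 * (s + 1 / 2) - π * ℓ / 2 * (s + 1 + 1 / 2) = -(2 * (π * ℓ / 4)) by ring,
    neg_div, mul_div_cancel_left₀ _ two_ne_zero, sin_neg]
  ring_nf

theorem abs_stepValue_add_sub_le (hℓ : 0 ≤ ℓ) (p j : ℕ) :
    |stepValue ℓ (p + j) - stepValue ℓ p| ≤ π * ℓ * j / 2 := by
  refine (abs_cos_sub_cos_le _ _).trans_eq ?_
  push_cast
  rw [show π * ℓ / 2 * (p + j + 1 / 2) - π * ℓ / 2 * (p + 1 / 2) = π * ℓ * j / 2 by ring,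
    abs_of_nonneg (by positivity)]

theorem sum_stepValue (hℓ : ℓ = (m : ℝ)⁻¹) : ∑ s ∈ range (2 * m), stepValue ℓ s = 0 := by
  have hrefl : ∀ s ∈ range (2 * m), stepValue ℓ (2 * m - 1 - s) = -stepValue ℓ s := by
    intro s hs
    have hs := mem_range.1 hs
    have hm : (m : ℝ) ≠ 0 := by norm_cast; omega
    rw [stepValue, stepValue, ← cos_pi_sub, Nat.cast_sub (by omega), Nat.cast_sub (by omega), hℓ]
    congr 1
    field_simp
    push_cast
    ring
  have h := sum_range_reflect (stepValue ℓ) (2 * m)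
  rw [sum_congr rfl hrefl, sum_neg_distrib] at h
  linarith

theorem sum_stepValue_sq (hm : 0 < m) (hℓ : ℓ = (m : ℝ)⁻¹) :
    ∑ s ∈ range (2 * m), stepValue ℓ s ^ 2 = m := by
  have h := sum_sin_sq_pi_mul_div_add (n := 2 * m) (by omega) (π / (4 * m))
  have harg (s : ℕ) : π * ℓ / 2 * (s + 1 / 2) = π * s / (2 * m : ℕ) + π / (4 * m) := by
    rw [hℓ]
    push_cast
    field_simp
    ring
  simp_rw [stepValue, cos_sq', harg, sum_sub_distrib, h]
  simp
  ring

theorem blockVar_stepValue_zero_two_mul (hm : 0 < m) (hℓ : ℓ = (m : ℝ)⁻¹) :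
    blockVar (stepValue ℓ) 0 (2 * m) = m := by
  simp only [blockVar, zero_add, sum_stepValue hℓ, zero_div, sub_zero]
  exact sum_stepValue_sq hm hℓ

theorem half_mul_blockVar_stepValue_two (ℓ : ℝ) (s : ℕ) :
    ℓ / 2 * blockVar (stepValue ℓ) s 2 =
      ℓ * sin (π * ℓ / 4) ^ 2 * sin (π * ℓ * (s + 1) / 2) ^ 2 := by
  rw [blockVar_two, stepValue_sub_succ]
  ring

theorem blockVar_stepValue_zero_three_le (hℓ : 0 ≤ ℓ) :
    blockVar (stepValue ℓ) 0 3 ≤ 5 * π ^ 2 * ℓ ^ 2 / 4 := by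
  refine (blockVar_le_sum_sq_sub _ 0 3 (stepValue ℓ 0)).trans ?_
  have hdev (j : ℕ) : (stepValue ℓ (0 + j) - stepValue ℓ 0) ^ 2 ≤ (π * ℓ * j / 2) ^ 2 :=
    sq_le_sq' (abs_le.1 (abs_stepValue_add_sub_le hℓ 0 j)).1
      (abs_le.1 (abs_stepValue_add_sub_le hℓ 0 j)).2
  simp only [sum_range_succ, sum_range_zero]
  nlinarith [hdev 0, hdev 1, hdev 2]

end stepValue

section cubes

variable {ℓ : ℝ} {m : ℕ}

theorem Var_Icc_zero_one_stepFn (hm : 0 < m) (hℓ : ℓ = (m : ℝ)⁻¹) :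
    Var (Icc 0 1) (stepFn ℓ m) = 1 / 2 := by
  have hl : 0 < ℓ := by rw [hℓ]; positivity
  rw [stepFn_eq_stepProfile, Var_Icc_stepProfile (N := 2 * m) (p := 0) (n := 2 * m) (half_pos hl)
    (by simp) zero_le_one (by simp) (by rw [hℓ]; push_cast; field_simp; simp),
    blockVar_stepValue_zero_two_mul hm hℓ, hℓ]
  simp
  field_simp

theorem Var_B_stepFn (hl : 0 < ℓ) {k : Fin 3 → ℕ} (hk : k 0 < m) :
    Var (B ℓ k) (stepFn ℓ m) = ℓ / 2 * blockVar (stepValue ℓ) (2 * k 0) 2 * ℓ * ℓ := by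
  rw [stepFn_eq_stepProfile, B, Var_Icc_stepProfile (N := 2 * m) (p := 2 * k 0) (n := 2)
    (half_pos hl) (by omega) (fun i => by dsimp; nlinarith) (by push_cast; ring)
    (by push_cast; ring)]
  ring

theorem sum_Var_B_stepFn_eq_sum_blockVar (hℓ : ℓ = (m : ℝ)⁻¹) :
    ∑ k ∈ Fintype.piFinset (fun _ : Fin 3 => range m), Var (B ℓ k) (stepFn ℓ m) =
      ∑ j ∈ range m, ℓ / 2 * blockVar (stepValue ℓ) (2 * j) 2 := by
  rcases m.eq_zero_or_pos with rfl | hm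
  · simp
  have hl : 0 < ℓ := by rw [hℓ]; positivity
  have hmℓ : (m : ℝ) * ℓ = 1 := by rw [hℓ]; field_simp
  rw [sum_congr rfl fun k hk => Var_B_stepFn hl (mem_range.1 (Fintype.mem_piFinset.1 hk 0)),
    sum_piFinset_fin_three_mul (f₀ := fun j => ℓ / 2 * blockVar (stepValue ℓ) (2 * j) 2)
      (f₁ := fun _ => ℓ) (f₂ := fun _ => ℓ)]
  simp [hmℓ]

theorem sum_Var_B_stepFn_of_two_le (hm : 2 ≤ m) (hℓ : ℓ = (m : ℝ)⁻¹) :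
    ∑ k ∈ Fintype.piFinset (fun _ : Fin 3 => range m), Var (B ℓ k) (stepFn ℓ m) =
      sin (π * ℓ / 4) ^ 2 / 2 := by
  have hsin : ∑ j ∈ range m, sin (π * ℓ * ((2 * j : ℕ) + 1) / 2) ^ 2 = m / 2 := by
    rw [← sum_sin_sq_pi_mul_div_add hm (π / (2 * m))]
    refine sum_congr rfl fun j _ => ?_
    rw [hℓ]
    push_cast
    field_simp
  rw [sum_Var_B_stepFn_eq_sum_blockVar hℓ]
  simp_rw [half_mul_blockVar_stepValue_two, ← mul_sum, hsin, hℓ]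
  field_simp

end cubes

section shifted

/- In units of the half-cell length `ℓ / 2`, the first side of `Bshift ℓ m k` runs from
`shiftStart (k 0)` to `shiftStart (k 0) + shiftLen m (k 0)`; in units of `ℓ`, its other sides have
lengths `shiftWidth m (k 1)` and `shiftWidth m (k 2)`. -/

def shiftStart (j : ℕ) : ℕ := 2 * j + if 0 < j then 1 else 0

def shiftLen (m j : ℕ) : ℕ := 2 + (if j < m - 1 then 1 else 0) - if 0 < j then 1 else 0

noncomputable def shiftWidth (m j : ℕ) : ℝ :=
  1 + (if j < m - 1 then 1 / 2 else 0) - if 0 < j then 1 / 2 else 0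

theorem sum_shiftWidth (m : ℕ) : ∑ j ∈ range m, shiftWidth m j = m := by
  have hrefl : ∑ j ∈ range m, (if j < m - 1 then (1 / 2 : ℝ) else 0) =
      ∑ j ∈ range m, if 0 < j then (1 / 2 : ℝ) else 0 := by
    rw [← sum_range_reflect]
    refine sum_congr rfl fun j hj => ?_
    have hj := mem_range.1 hj
    simp only [show m - 1 - j < m - 1 ↔ 0 < j by omega]
  simp only [shiftWidth, sum_sub_distrib, sum_add_distrib, hrefl]
  simp

variable {ℓ : ℝ} {m : ℕ}

theorem Var_Bshift_stepFn (hl : 0 < ℓ) {k : Fin 3 → ℕ} (hk : k 0 < m) :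
    Var (Bshift ℓ m k) (stepFn ℓ m) =
      ℓ / 2 * blockVar (stepValue ℓ) (shiftStart (k 0)) (shiftLen m (k 0)) *
        (ℓ * shiftWidth m (k 1)) * (ℓ * shiftWidth m (k 2)) := by
  rw [stepFn_eq_stepProfile, Bshift, Var_Icc_stepProfile (N := 2 * m) (p := shiftStart (k 0))
    (n := shiftLen m (k 0)) (half_pos hl)
    (by simp only [shiftStart, shiftLen]; split_ifs <;> omega)
    (fun i => by dsimp only; split_ifs <;> nlinarith)
    (by simp only [shiftStart]; split_ifs <;> push_cast <;> ring)
    (by simp only [shiftStart, shiftLen]; split_ifs <;> norm_num <;> ring)]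
  simp only [shiftWidth]
  ring

theorem sum_Var_Bshift_stepFn_eq_sum_blockVar (hℓ : ℓ = (m : ℝ)⁻¹) :
    ∑ k ∈ Fintype.piFinset (fun _ : Fin 3 => range m), Var (Bshift ℓ m k) (stepFn ℓ m) =
      ∑ j ∈ range m, ℓ / 2 * blockVar (stepValue ℓ) (shiftStart j) (shiftLen m j) := by
  rcases m.eq_zero_or_pos with rfl | hm
  · simp
  have hl : 0 < ℓ := by rw [hℓ]; positivity
  have hmℓ : ℓ * m = 1 := by rw [hℓ]; field_simp
  rw [sum_congr rfl fun k hk => Var_Bshift_stepFn hl (mem_range.1 (Fintype.mem_piFinset.1 hk 0)),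
    sum_piFinset_fin_three_mul
      (f₀ := fun j => ℓ / 2 * blockVar (stepValue ℓ) (shiftStart j) (shiftLen m j))
      (f₁ := fun j => ℓ * shiftWidth m j) (f₂ := fun j => ℓ * shiftWidth m j)]
  simp [← mul_sum, sum_shiftWidth, hmℓ]

theorem sum_Var_Bshift_stepFn_of_two_le (hm : 2 ≤ m) (hℓ : ℓ = (m : ℝ)⁻¹) :
    ∑ k ∈ Fintype.piFinset (fun _ : Fin 3 => range m), Var (Bshift ℓ m k) (stepFn ℓ m) =
      sin (π * ℓ / 4) ^ 2 / 2 - ℓ * sin (π * ℓ / 4) ^ 2 * sin (π * ℓ) ^ 2 +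
        ℓ / 2 * blockVar (stepValue ℓ) 0 3 := by
  obtain ⟨N, rfl⟩ : ∃ N, m = N + 2 := ⟨m - 2, by omega⟩
  have hmid : ∀ i ∈ range N,
      ℓ / 2 * blockVar (stepValue ℓ) (shiftStart (i + 1)) (shiftLen (N + 2) (i + 1)) =
        ℓ * sin (π * ℓ / 4) ^ 2 * sin (π * (i + 1 + 1 : ℕ) / (N + 2 : ℕ)) ^ 2 := by
    intro i hi
    have hi := mem_range.1 hi
    rw [show shiftStart (i + 1) = 2 * i + 3 by simp [shiftStart]; omega,
      show shiftLen (N + 2) (i + 1) = 2 by simp [shiftLen, hi],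
      half_mul_blockVar_stepValue_two, hℓ]
    congr 3
    push_cast
    field_simp
    ring
  have hsin := sum_sin_sq_pi_mul_div_add (n := N + 2) hm 0
  rw [sum_range_succ', sum_range_succ'] at hsin
  rw [sum_Var_Bshift_stepFn_eq_sum_blockVar hℓ, sum_range_succ, sum_range_succ',
    sum_congr rfl hmid, ← mul_sum, show shiftLen (N + 2) (N + 1) = 1 by simp [shiftLen],
    blockVar_one, show shiftLen (N + 2) 0 = 3 by simp [shiftLen]]
  have hq : sin (π * (0 + 1 : ℕ) / (N + 2 : ℕ)) = sin (π * ℓ) := by rw [hℓ]; push_cast; ring_nf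
  have hmℓ : ℓ * (N + 2 : ℕ) = 1 := by rw [hℓ]; field_simp
  simp only [hq, add_zero, Nat.cast_zero, mul_zero, zero_div, sin_zero] at hsin
  simp only [shiftStart, lt_self_iff_false, if_false, mul_zero, add_zero]
  linear_combination (ℓ * sin (π * ℓ / 4) ^ 2) * hsin + sin (π * ℓ / 4) ^ 2 / 2 * hmℓ

end shifted

theorem sum_Var_B_add_Var_Bshift_stepFn_one :
    ∑ k ∈ Fintype.piFinset (fun _ : Fin 3 => range 1),
      (Var (B 1 k) (stepFn 1 1) + Var (Bshift 1 1 k) (stepFn 1 1)) = 1 := by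
  have hℓ : (1 : ℝ) = ((1 : ℕ) : ℝ)⁻¹ := by norm_num
  have h := blockVar_stepValue_zero_two_mul one_pos hℓ
  rw [sum_add_distrib, sum_Var_B_stepFn_eq_sum_blockVar hℓ,
    sum_Var_Bshift_stepFn_eq_sum_blockVar hℓ]
  simp only [sum_range_one, shiftStart, shiftLen]
  norm_num at h ⊢
  linarith

theorem abs_sum_Var_B_add_Var_Bshift_stepFn_sub_le {ℓ : ℝ} {m : ℕ} (hm : 2 ≤ m)
    (hℓ : ℓ = (m : ℝ)⁻¹) :
    |∑ k ∈ Fintype.piFinset (fun _ : Fin 3 => range m),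
        (Var (B ℓ k) (stepFn ℓ m) + Var (Bshift ℓ m k) (stepFn ℓ m)) - π ^ 2 * ℓ ^ 2 / 16| ≤
      12 * ℓ ^ 3 := by
  have hl : 0 < ℓ := by rw [hℓ]; positivity
  have hl2 : ℓ ≤ 1 / 2 := by
    rw [hℓ]; exact inv_le_of_inv_le₀ (by norm_num) (by norm_num; exact_mod_cast hm)
  rw [sum_add_distrib, sum_Var_B_stepFn_of_two_le hm hℓ, sum_Var_Bshift_stepFn_of_two_le hm hℓ]
  set x := π * ℓ / 4
  have hπ : π ^ 2 ≤ 16 := by nlinarith [pi_pos, pi_lt_four]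
  have hx : 0 ≤ x ∧ x ≤ ℓ := ⟨by positivity, by simp only [x]; nlinarith [pi_lt_four]⟩
  have hx2 : x ^ 2 ≤ ℓ ^ 2 := pow_le_pow_left₀ hx.1 hx.2 2
  have hlow := sq_sub_pow_four_div_three_le_sin_sq hx.1 (by nlinarith)
  have hup : sin x ^ 2 ≤ x ^ 2 := sin_sq_le_sq
  have hx4 : x ^ 4 ≤ ℓ ^ 3 := by nlinarith [pow_le_pow_left₀ (sq_nonneg x) hx2 2]
  have hs0 : 0 ≤ ℓ * sin x ^ 2 := by positivity
  have hlsq : 0 ≤ ℓ * sin x ^ 2 * sin (π * ℓ) ^ 2 ∧ ℓ * sin x ^ 2 * sin (π * ℓ) ^ 2 ≤ ℓ ^ 3 :=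
    ⟨by positivity, by nlinarith [mul_le_mul_of_nonneg_left (sin_sq_le_one (π * ℓ)) hs0,
      mul_le_mul_of_nonneg_left (hup.trans hx2) hl.le]⟩
  have hV := blockVar_stepValue_zero_three_le hl.le
  have hlV : ℓ / 2 * blockVar (stepValue ℓ) 0 3 ≤ 10 * ℓ ^ 3 := by
    nlinarith [mul_le_mul_of_nonneg_left hV hl.le, mul_le_mul_of_nonneg_right hπ (pow_pos hl 3).le]
  have hlV0 : 0 ≤ ℓ / 2 * blockVar (stepValue ℓ) 0 3 :=
    mul_nonneg (by positivity) (sum_nonneg fun _ _ => sq_nonneg _)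
  rw [show π ^ 2 * ℓ ^ 2 / 16 = x ^ 2 by ring, abs_le]
  constructor <;> linarith

/-- Optimality of the two-partition localization constant: for the oscillating step
function `u`, `Σ_k (Var_{B_{ℓ,k}}(u) + Var_{B_{ℓ,k}^{shift}}(u))` equals
`(π²ℓ²/8) Var_{[0,1]³}(u)` up to an error of order `ℓ³ Var_{[0,1]³}(u)`. -/
theorem optimality_of_constant :
    ∃ C > (0 : ℝ), ∀ (m : ℕ), 0 < m → ∀ ℓ : ℝ, ℓ = (m : ℝ)⁻¹ →
      |(∑ k ∈ Fintype.piFinset (fun _ : Fin 3 => Finset.range m),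
            (Var (B ℓ k) (stepFn ℓ m) + Var (Bshift ℓ m k) (stepFn ℓ m))) -
          π ^ 2 * ℓ ^ 2 / 8 * Var (Set.Icc (0 : Fin 3 → ℝ) 1) (stepFn ℓ m)|
        ≤ C * ℓ ^ 3 * Var (Set.Icc (0 : Fin 3 → ℝ) 1) (stepFn ℓ m) := by
  refine ⟨24, by norm_num, fun m hm ℓ hℓ => ?_⟩
  rw [Var_Icc_zero_one_stepFn hm hℓ]
  rcases (show m = 1 ∨ 2 ≤ m by omega) with rfl | hm2
  · obtain rfl : ℓ = 1 := by simpa using hℓ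
    rw [sum_Var_B_add_Var_Bshift_stepFn_one, abs_le]
    constructor <;> nlinarith [pi_gt_three, pi_lt_four]
  · have h := abs_sum_Var_B_add_Var_Bshift_stepFn_sub_le hm2 hℓ
    rw [show π ^ 2 * ℓ ^ 2 / 8 * (1 / 2) = π ^ 2 * ℓ ^ 2 / 16 by ring]
    linarith
end

section
/- Let ℓ > 0 with ℓ⁻¹ ∈ ℕ, ℓ⁻¹ ≥ 6. Let k, s ∈ {0,1,…,ℓ⁻¹−1}³ with 2 ≤ k_i ≤ ℓ⁻¹ − 3 for all i, and s ≠ k. Then Σ_{s' ∈ {0,…,ℓ⁻¹−1}³} |B_{ℓ,k} ∩ B_{ℓ,s'}^{shift}| · |B_{ℓ,s} ∩ B_{ℓ,s'}^{shift}| / (ℓ³ |B_{ℓ,s'}^{shift}|) equals 1/16 if |k−s|₁ = 1; equals 1/32 if |k−s|_∞ = 1 and |k−s|₁ = 2; equals 1/64 if |k−s|_∞ = 1 and |k−s|₁ = 3; and equals 0 if |k−s|_∞ ≥ 2. Here |·|₁ and |·|_∞ denote the ℓ¹- and ℓ^∞-norms on ℤ³ and |·| denotes Lebesgue measure. -/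
open MeasureTheory Real

/-- The edge weight
`Σ_{s'} |B_{ℓ,k} ∩ B_{ℓ,s'}^{shift}||B_{ℓ,s} ∩ B_{ℓ,s'}^{shift}|/(ℓ³|B_{ℓ,s'}^{shift}|)`. -/
noncomputable def edgeWeight (ℓ : ℝ) (m : ℕ) (k s : Fin 3 → ℕ) : ℝ :=
  ∑ s' ∈ Fintype.piFinset (fun _ : Fin 3 => Finset.range m),
    (volume (B ℓ k ∩ Bshift ℓ m s')).toReal * (volume (B ℓ s ∩ Bshift ℓ m s')).toReal /
      (ℓ ^ 3 * (volume (Bshift ℓ m s')).toReal)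


/-!
Every box involved is a product of intervals, so the weight factorises into a product over the
three axes of one-dimensional weights. Along one axis an interior cell `[K, K + 1]` (in units of
`ℓ`) meets only the shifted cells `[K - 1/2, K + 1/2]` and `[K + 1/2, K + 3/2]`, each in an
interval of length `1/2`, so the one-dimensional weight is `1/2` if `S = K`, `1/4` if `|S - K| = 1` and `0`
otherwise. Multiplying, the weight is `0` as soon as some `|k_i - s_i| ≥ 2`, and
`(1/2)^(3 + |k - s|₁)` otherwise.
-/

open Set Finset

lemma volume_Icc_inter_Icc_eq_zero {a b c d : ℝ} (h : b ≤ c ∨ d ≤ a) :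
    volume (Icc a b ∩ Icc c d) = 0 := by
  rw [Icc_inter_Icc, Real.volume_Icc, ENNReal.ofReal_eq_zero, sub_nonpos]
  rcases h with h | h
  · exact (min_le_left b d).trans (h.trans (le_max_right a c))
  · exact (min_le_right b d).trans (h.trans (le_max_left a c))

noncomputable def hat (t : ℝ) : ℝ := max (1 - |t|) 0

lemma hat_eq_zero {t : ℝ} (h : 1 ≤ |t|) : hat t = 0 :=
  max_eq_right (by linarith)

lemma toReal_volume_Icc_inter_Icc_mul {ℓ : ℝ} (hℓ : 0 ≤ ℓ) (a b : ℝ) :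
    (volume (Icc (a * ℓ) ((a + 1) * ℓ) ∩ Icc (b * ℓ) ((b + 1) * ℓ))).toReal = ℓ * hat (a - b) := by
  have hlen : min (a + 1) (b + 1) - max a b = 1 - |a - b| := by
    rw [min_add_add_right, abs_sub_comm, ← max_sub_min_eq_abs]; ring
  rw [Icc_inter_Icc, Real.volume_Icc, ENNReal.toReal_ofReal', ← max_mul_of_nonneg _ _ hℓ,
    ← min_mul_of_nonneg _ _ hℓ, ← sub_mul, hlen, hat, mul_max_of_nonneg _ _ hℓ, mul_zero, mul_comm]

section OneAxis

variable (ℓ : ℝ) (m : ℕ)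

def cell (K : ℕ) : Set ℝ := Icc ((K : ℝ) * ℓ) (((K : ℝ) + 1) * ℓ)

def shiftCell (x : ℕ) : Set ℝ :=
  Icc (((x : ℝ) + if 0 < x then (1 : ℝ) / 2 else 0) * ℓ)
    (((x : ℝ) + 1 + if x < m - 1 then (1 : ℝ) / 2 else 0) * ℓ)

noncomputable def edgeWeight1D (K S : ℕ) : ℝ :=
  ∑ x ∈ range m, (volume (cell ℓ K ∩ shiftCell ℓ m x)).toReal *
    (volume (cell ℓ S ∩ shiftCell ℓ m x)).toReal / (ℓ * (volume (shiftCell ℓ m x)).toReal)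

noncomputable def interiorEdgeWeight1D : ℕ → ℝ
  | 0 => 1 / 2
  | 1 => 1 / 4
  | _ => 0

variable {ℓ m}

lemma shiftCell_of_interior {x : ℕ} (h0 : 0 < x) (h1 : x + 1 < m) :
    shiftCell ℓ m x = Icc (((x : ℝ) + 1 / 2) * ℓ) (((x : ℝ) + 1 / 2 + 1) * ℓ) := by
  rw [shiftCell, if_pos h0, if_pos (by omega), add_right_comm _ 1]

lemma volume_cell_inter_shiftCell_eq_zero (hℓ : 0 ≤ ℓ) {K x : ℕ} (h : x + 2 ≤ K ∨ K + 1 ≤ x) :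
    volume (cell ℓ K ∩ shiftCell ℓ m x) = 0 := by
  apply volume_Icc_inter_Icc_eq_zero
  rcases h with h | h
  · have h' : (x : ℝ) + 2 ≤ K := by exact_mod_cast h
    right
    apply mul_le_mul_of_nonneg_right _ hℓ
    split_ifs <;> linarith
  · have h' : (K : ℝ) + 1 ≤ x := by exact_mod_cast h
    left
    rw [if_pos (by omega)]
    apply mul_le_mul_of_nonneg_right _ hℓ
    linarith

lemma overlap_div_volume_shiftCell (hℓ : 0 < ℓ) {x : ℕ} (h0 : 0 < x) (h1 : x + 1 < m)
    (K S : ℕ) :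
    (volume (cell ℓ K ∩ shiftCell ℓ m x)).toReal * (volume (cell ℓ S ∩ shiftCell ℓ m x)).toReal /
        (ℓ * (volume (shiftCell ℓ m x)).toReal) =
      hat (K - (x + 1 / 2)) * hat (S - (x + 1 / 2)) := by
  have hvol : (volume (shiftCell ℓ m x)).toReal = ℓ := by
    rw [shiftCell_of_interior h0 h1, Real.volume_Icc, ENNReal.toReal_ofReal (by nlinarith)]
    ring
  rw [hvol, shiftCell_of_interior h0 h1, cell, cell, toReal_volume_Icc_inter_Icc_mul hℓ.le,
    toReal_volume_Icc_inter_Icc_mul hℓ.le]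
  field_simp

lemma interiorEdgeWeight1D_of_two_le {n : ℕ} (h : 2 ≤ n) : interiorEdgeWeight1D n = 0 := by
  obtain ⟨n, rfl⟩ := Nat.exists_eq_add_of_le' h
  rfl

lemma hat_add_hat_half (d : ℤ) :
    hat (d + 1 / 2) + hat (d - 1 / 2) = 2 * interiorEdgeWeight1D d.natAbs := by
  rcases (by omega : d ≤ -2 ∨ d = -1 ∨ d = 0 ∨ d = 1 ∨ 2 ≤ d) with h | rfl | rfl | rfl | h
  · have h' : (d : ℝ) ≤ -2 := by exact_mod_cast h
    rw [hat_eq_zero (by rw [abs_of_neg (by linarith)]; linarith),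
      hat_eq_zero (by rw [abs_of_neg (by linarith)]; linarith),
      interiorEdgeWeight1D_of_two_le (by omega), add_zero, mul_zero]
  · norm_num [hat, interiorEdgeWeight1D]
  · norm_num [hat, interiorEdgeWeight1D]
  · norm_num [hat, interiorEdgeWeight1D]
  · have h' : (2 : ℝ) ≤ d := by exact_mod_cast h
    rw [hat_eq_zero (by rw [abs_of_pos (by linarith)]; linarith),
      hat_eq_zero (by rw [abs_of_pos (by linarith)]; linarith),
      interiorEdgeWeight1D_of_two_le (by omega), add_zero, mul_zero]

lemma edgeWeight1D_of_interior (hℓ : 0 < ℓ) {K : ℕ} (hK : 2 ≤ K) (hKm : K + 2 ≤ m) (S : ℕ) :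
    edgeWeight1D ℓ m K S = interiorEdgeWeight1D ((K : ℤ) - S).natAbs := by
  obtain ⟨J, rfl⟩ : ∃ J, K = J + 1 := ⟨K - 1, by omega⟩
  have hsub : {J, J + 1} ⊆ Finset.range m := by
    simp only [Finset.insert_subset_iff, Finset.singleton_subset_iff, Finset.mem_range]
    omega
  rw [edgeWeight1D, ← Finset.sum_subset hsub fun x hx hx' => ?_, Finset.sum_pair (by omega),
    overlap_div_volume_shiftCell hℓ (by omega) (by omega),
    overlap_div_volume_shiftCell hℓ (by omega) (by omega)]
  · have hhat := hat_add_hat_half ((S : ℤ) - (J + 1 : ℕ))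
    rw [← Int.natAbs_neg, neg_sub]
    push_cast at hhat ⊢
    have hhalf : hat (1 / 2) = 1 / 2 ∧ hat (-(1 / 2)) = 1 / 2 := by norm_num [hat]
    rw [show (J : ℝ) + 1 - (J + 1 / 2) = 1 / 2 by ring,
      show (J : ℝ) + 1 - (J + 1 + 1 / 2) = -(1 / 2) by ring,
      show (S : ℝ) - (J + 1 / 2) = S - (J + 1) + 1 / 2 by ring,
      show (S : ℝ) - (J + 1 + 1 / 2) = S - (J + 1) - 1 / 2 by ring, hhalf.1, hhalf.2]
    linarith
  · simp only [Finset.mem_range, Finset.mem_insert, Finset.mem_singleton] at hx hx'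
    rw [volume_cell_inter_shiftCell_eq_zero hℓ.le (by omega), ENNReal.toReal_zero, zero_mul,
      zero_div]

end OneAxis

lemma B_eq_pi (ℓ : ℝ) (k : Fin 3 → ℕ) : B ℓ k = univ.pi fun i => cell ℓ (k i) :=
  (pi_univ_Icc _ _).symm

lemma Bshift_eq_pi (ℓ : ℝ) (m : ℕ) (k : Fin 3 → ℕ) :
    Bshift ℓ m k = univ.pi fun i => shiftCell ℓ m (k i) :=
  (pi_univ_Icc _ _).symm

lemma toReal_volume_pi {ι : Type*} [Fintype ι] (s : ι → Set ℝ) :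
    (volume (univ.pi s)).toReal = ∏ i, (volume (s i)).toReal := by
  rw [volume_pi_pi, ENNReal.toReal_prod]

lemma edgeWeight_eq_prod (ℓ : ℝ) (m : ℕ) (k s : Fin 3 → ℕ) :
    edgeWeight ℓ m k s = ∏ i, edgeWeight1D ℓ m (k i) (s i) := by
  simp only [edgeWeight1D, Finset.prod_univ_sum]
  refine Finset.sum_congr rfl fun s' _ => ?_
  simp only [B_eq_pi, Bshift_eq_pi, ← pi_inter_distrib, toReal_volume_pi]
  rw [show ℓ ^ 3 = ∏ _i : Fin 3, ℓ by simp, ← Finset.prod_mul_distrib, ← Finset.prod_mul_distrib,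
    ← Finset.prod_div_distrib]

lemma prod_interiorEdgeWeight1D_of_sup_le_one {ι : Type*} [Fintype ι] {n : ι → ℕ}
    (h : univ.sup n ≤ 1) :
    ∏ i, interiorEdgeWeight1D (n i) = (1 / 2) ^ (Fintype.card ι + ∑ i, n i) := by
  rw [pow_add, ← Finset.prod_pow_eq_pow_sum, Finset.card_univ.symm, ← Finset.prod_const,
    ← Finset.prod_mul_distrib]
  refine Finset.prod_congr rfl fun i hi => ?_
  have := (Finset.le_sup hi).trans h
  interval_cases n i <;> norm_num [interiorEdgeWeight1D]

lemma prod_interiorEdgeWeight1D_of_two_le_sup {ι : Type*} [Fintype ι] {n : ι → ℕ}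
    (h : 2 ≤ univ.sup n) : ∏ i, interiorEdgeWeight1D (n i) = 0 := by
  obtain ⟨i, -, hi⟩ := Finset.lt_sup_iff.1 (Nat.lt_of_succ_le h)
  exact Finset.prod_eq_zero (mem_univ i) (interiorEdgeWeight1D_of_two_le hi)

theorem overlap_weights_general (m : ℕ) (ℓ : ℝ) (hℓ : ℓ = (m : ℝ)⁻¹)
    (k s : Fin 3 → ℕ) (hk : ∀ i, 2 ≤ k i ∧ k i ≤ m - 3) :
    ((∑ i, ((k i : ℤ) - (s i : ℤ)).natAbs) = 1 → edgeWeight ℓ m k s = 1 / 16) ∧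
    ((Finset.univ.sup (fun i => ((k i : ℤ) - (s i : ℤ)).natAbs) = 1 ∧
        (∑ i, ((k i : ℤ) - (s i : ℤ)).natAbs) = 2) → edgeWeight ℓ m k s = 1 / 32) ∧
    ((Finset.univ.sup (fun i => ((k i : ℤ) - (s i : ℤ)).natAbs) = 1 ∧
        (∑ i, ((k i : ℤ) - (s i : ℤ)).natAbs) = 3) → edgeWeight ℓ m k s = 1 / 64) ∧
    (2 ≤ Finset.univ.sup (fun i => ((k i : ℤ) - (s i : ℤ)).natAbs) →
      edgeWeight ℓ m k s = 0) := by
  have hℓ_pos : 0 < ℓ := hℓ ▸ inv_pos.2 (Nat.cast_pos.2 (by have := hk 0; omega))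
  have hweight :
      edgeWeight ℓ m k s = ∏ i, interiorEdgeWeight1D ((k i : ℤ) - (s i : ℤ)).natAbs := by
    rw [edgeWeight_eq_prod]
    exact Finset.prod_congr rfl fun i _ =>
      edgeWeight1D_of_interior hℓ_pos (hk i).1 (by have := hk i; omega) (s i)
  refine ⟨fun hsum => ?_, fun ⟨hsup, hsum⟩ => ?_, fun ⟨hsup, hsum⟩ => ?_, fun hsup => ?_⟩
  · have hsup : univ.sup (fun i => ((k i : ℤ) - (s i : ℤ)).natAbs) ≤ 1 :=
      Finset.sup_le fun i hi => (single_le_sum (fun _ _ => Nat.zero_le _) hi).trans hsum.le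
    rw [hweight, prod_interiorEdgeWeight1D_of_sup_le_one hsup, hsum]
    norm_num
  · rw [hweight, prod_interiorEdgeWeight1D_of_sup_le_one hsup.le, hsum]
    norm_num
  · rw [hweight, prod_interiorEdgeWeight1D_of_sup_le_one hsup.le, hsum]
    norm_num
  · rw [hweight, prod_interiorEdgeWeight1D_of_two_le_sup hsup]

/-- Overlap weights of the discrete operator: for `k` away from the boundary
(`2 ≤ k_i ≤ ℓ⁻¹ − 3`) and `s ≠ k`, the edge weight equals `1/16` for nearest neighbours,
`1/32` for face diagonals, `1/64` for body diagonals, and `0` otherwise. -/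
theorem overlap_weights (m : ℕ) (hm : 6 ≤ m) (ℓ : ℝ) (hℓ : ℓ = (m : ℝ)⁻¹)
    (k s : Fin 3 → ℕ) (hk : ∀ i, 2 ≤ k i ∧ k i ≤ m - 3) (hs : ∀ i, s i < m)
    (hne : s ≠ k) :
    ((∑ i, ((k i : ℤ) - (s i : ℤ)).natAbs) = 1 → edgeWeight ℓ m k s = 1 / 16) ∧
    ((Finset.univ.sup (fun i => ((k i : ℤ) - (s i : ℤ)).natAbs) = 1 ∧
        (∑ i, ((k i : ℤ) - (s i : ℤ)).natAbs) = 2) → edgeWeight ℓ m k s = 1 / 32) ∧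
    ((Finset.univ.sup (fun i => ((k i : ℤ) - (s i : ℤ)).natAbs) = 1 ∧
        (∑ i, ((k i : ℤ) - (s i : ℤ)).natAbs) = 3) → edgeWeight ℓ m k s = 1 / 64) ∧
    (2 ≤ Finset.univ.sup (fun i => ((k i : ℤ) - (s i : ℤ)).natAbs) →
      edgeWeight ℓ m k s = 0) :=
  overlap_weights_general m ℓ hℓ k s hk
end

section
/- Let n ∈ ℕ, n ≥ 2. For m ∈ {0,1,…,n−1}³ define λ_m = (1/8) [ Σ_{i=1}^3 (1 − cos(π m_i / n)) + Σ_{1 ≤ i < j ≤ 3} (1 − cos(π m_i / n) cos(π m_j / n)) + (1 − ∏_{i=1}^3 cos(π m_i / n)) ]. Then for every m ≠ (0,0,0) one has λ_m ≥ (1 − cos(π/n))/2, and λ_{(1,0,0)} = (1 − cos(π/n))/2. -/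
/-!
Writing `c_i = cos (π m_i / n)`, the eigenvalue factors as `λ_m = 1 - (1 + c_1)(1 + c_2)(1 + c_3) / 8`.
If `m ≠ 0`, some `m_i` lies in `[1, n)`, so `c_i ≤ cos (π / n)` because cosine decreases on `[0, π]`;
the two other factors are at most `2`, which gives `λ_m ≥ 1 - 4 (1 + cos (π / n)) / 8`.
For `m = (1, 0, 0)` every step is an equality: `c_1 = cos (π / n)` and `c_2 = c_3 = 1`.
-/

open Real

/-- The eigenvalue `λ_m` of the weighted Neumann graph Laplacian on `{0,…,n−1}³`. -/
noncomputable def lam (n : ℕ) (m : Fin 3 → ℕ) : ℝ :=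
  (1 / 8) * ((∑ i, (1 - Real.cos (π * (m i) / n))) +
    (∑ p ∈ Finset.univ.filter (fun p : Fin 3 × Fin 3 => p.1 < p.2),
      (1 - Real.cos (π * (m p.1) / n) * Real.cos (π * (m p.2) / n))) +
    (1 - ∏ i, Real.cos (π * (m i) / n)))

lemma lam_eq_one_sub_prod (n : ℕ) (m : Fin 3 → ℕ) :
    lam n m = 1 - (∏ i, (1 + cos (π * m i / n))) / 8 := by
  rw [lam, Fin.sum_univ_three, Fin.prod_univ_three, Fin.prod_univ_three, Finset.sum_filter,
    Fintype.sum_prod_type]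
  simp only [Fin.isValue, Fin.sum_univ_three, not_lt_zero, ↓reduceIte, Fin.lt_one_iff, Fin.reduceLT,
    one_ne_zero, Fin.reduceEq, lt_self_iff_false]
  ring

lemma cos_pi_mul_div_le_cos_pi_div {k n : ℕ} (hk : 1 ≤ k) (hkn : k ≤ n) :
    cos (π * k / n) ≤ cos (π / n) := by
  have hn : (0 : ℝ) < n := by exact_mod_cast (hk.trans hkn)
  have hk' : (1 : ℝ) ≤ k := by exact_mod_cast hk
  have hkn' : (k : ℝ) ≤ n := by exact_mod_cast hkn
  apply cos_le_cos_of_nonneg_of_le_pi (by positivity)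
  · rw [div_le_iff₀ hn]
    exact mul_le_mul_of_nonneg_left hkn' pi_pos.le
  · gcongr
    simpa using mul_le_mul_of_nonneg_left hk' pi_pos.le

lemma prod_one_add_le_of_le {ι : Type*} [Fintype ι] [DecidableEq ι] {c : ι → ℝ}
    (hc : ∀ j, c j ∈ Set.Icc (-1) 1) {i : ι} {C : ℝ} (hi : c i ≤ C) :
    ∏ j, (1 + c j) ≤ (1 + C) * 2 ^ (Fintype.card ι - 1) := by
  have hc_nonneg : ∀ j, 0 ≤ 1 + c j := fun j => by linarith [(hc j).1]
  have hrest : ∏ j ∈ Finset.univ.erase i, (1 + c j) ≤ 2 ^ (Fintype.card ι - 1) := by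
    calc ∏ j ∈ Finset.univ.erase i, (1 + c j)
        ≤ ∏ _j ∈ Finset.univ.erase i, (2 : ℝ) :=
          Finset.prod_le_prod (fun j _ => hc_nonneg j) fun j _ => by linarith [(hc j).2]
      _ = 2 ^ (Fintype.card ι - 1) := by
          rw [Finset.prod_const, Finset.card_erase_of_mem (Finset.mem_univ i), Finset.card_univ]
  rw [← Finset.mul_prod_erase Finset.univ _ (Finset.mem_univ i)]
  exact mul_le_mul (by linarith) hrest (Finset.prod_nonneg fun j _ => hc_nonneg j)
    (by linarith [hc_nonneg i])

theorem lam_spectral_gap_general (n : ℕ) :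
    (∀ m : Fin 3 → ℕ, (∀ i, m i < n) → m ≠ 0 →
      lam n m ≥ (1 - Real.cos (π / n)) / 2) ∧
    lam n (fun i => if i = 0 then 1 else 0) = (1 - Real.cos (π / n)) / 2 := by
  constructor
  · intro m hm hm0
    obtain ⟨i, hi⟩ : ∃ i, m i ≠ 0 := Function.ne_iff.mp hm0
    have hprod := prod_one_add_le_of_le (c := fun j => cos (π * m j / n))
      (fun j => ⟨neg_one_le_cos _, cos_le_one _⟩)
      (cos_pi_mul_div_le_cos_pi_div (Nat.one_le_iff_ne_zero.mpr hi) (hm i).le)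
    rw [Fintype.card_fin] at hprod
    rw [lam_eq_one_sub_prod]
    linarith
  · rw [lam_eq_one_sub_prod]
    simp only [Fin.prod_univ_three, Fin.isValue, ↓reduceIte, one_ne_zero, Fin.reduceEq, Nat.cast_ite,
      Nat.cast_one, CharP.cast_eq_zero, mul_one, mul_zero, zero_div, cos_zero]
    ring

/-- The spectral gap of the weighted Neumann graph Laplacian: for `m ≠ 0`,
`λ_m ≥ (1 − cos(π/n))/2`, with equality for `m = (1,0,0)`. -/
theorem lam_spectral_gap (n : ℕ) (hn : 2 ≤ n) :
    (∀ m : Fin 3 → ℕ, (∀ i, m i < n) → m ≠ 0 →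
      lam n m ≥ (1 - Real.cos (π / n)) / 2) ∧
    lam n (fun i => if i = 0 then 1 else 0) = (1 - Real.cos (π / n)) / 2 :=
  lam_spectral_gap_general n
end

section
/- Let n ∈ ℕ, n ≥ 2, and let f : {0,…,n−1}³ → ℝ with mean f̄ = n⁻³ Σ_k f(k). Then Σ_{i=1}^{3} Σ_{k : k_i ≤ n−2} (f(k + e_i) − f(k))² ≥ 2 (1 − cos(π/n)) Σ_{k} (f(k) − f̄)², where e_i denotes the i-th standard basis vector of ℤ³. (Spectral gap of the nearest-neighbour discrete Neumann Laplacian on the n×n×n grid.) -/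
/-!
On a path with `n` vertices the Neumann Laplacian `∇*∇` and the Dirichlet Laplacian `∇∇*` on the
`n - 1` edges have the same nonzero spectrum. Concretely, a centred `x` is `∇` of its partial sums
`P`, which vanish at both ends, so `‖x‖² = ⟨P, ∇∇* P⟩ ≥ λ ‖P‖²` and `‖x‖² = -⟨∇x, P⟩ ≤ ‖∇x‖ ‖P‖`;
together these give `λ ‖x‖² ≤ ‖∇x‖²`. The Dirichlet bound `λ = 2 - 2 cos (π / n)` comes from the
positive eigenvector `sin (j π / n)` via a weighted AM-GM. Poincaré inequalities with a common
constant tensorize: the variance on `s × t` splits into the mean fibre variance over `s` plus the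
variance of the fibre means, and the latter is controlled by the energy on `t` through Jensen's
inequality for the (convex) energy. Tensorizing the path twice gives the cube.
-/

open Real Finset

theorem two_mul_mul_le_div_mul_sq_add {a b : ℝ} (ha : 0 < a) (hb : 0 < b) (x y : ℝ) :
    2 * (x * y) ≤ b / a * x ^ 2 + a / b * y ^ 2 := by
  rw [div_mul_eq_mul_div, div_mul_eq_mul_div, div_add_div _ _ ha.ne' hb.ne',
    le_div_iff₀ (by positivity)]
  nlinarith [sq_nonneg (b * x - a * y), mul_pos ha hb]

theorem two_mul_sum_mul_succ_le_of_superharmonic (m : ℕ) (φ : ℕ → ℝ) (κ : ℝ) (h0 : φ 0 = 0)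
    (hlast : φ (m + 2) = 0) (hpos : ∀ j ≤ m, 0 < φ (j + 1))
    (hsuper : ∀ j ≤ m, φ j + φ (j + 2) ≤ κ * φ (j + 1)) (w : ℕ → ℝ) :
    2 * ∑ j ∈ range m, w j * w (j + 1) ≤ κ * ∑ j ∈ range (m + 1), w j ^ 2 := by
  calc 2 * ∑ j ∈ range m, w j * w (j + 1)
      ≤ ∑ j ∈ range m,
          (φ (j + 2) / φ (j + 1) * w j ^ 2 + φ (j + 1) / φ (j + 2) * w (j + 1) ^ 2) := by
        rw [mul_sum]
        refine sum_le_sum fun j hj => ?_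
        have hj := mem_range.1 hj
        exact two_mul_mul_le_div_mul_sq_add (hpos j (by omega)) (hpos (j + 1) (by omega)) _ _
    _ = ∑ j ∈ range (m + 1), (φ j + φ (j + 2)) / φ (j + 1) * w j ^ 2 := by
        simp only [add_div, add_mul, sum_add_distrib]
        rw [sum_range_succ (fun j => φ (j + 2) / φ (j + 1) * w j ^ 2),
          sum_range_succ' (fun j => φ j / φ (j + 1) * w j ^ 2), hlast, h0]
        simp only [zero_div, zero_mul, add_zero]
        ring
    _ ≤ ∑ j ∈ range (m + 1), κ * w j ^ 2 := by
        refine sum_le_sum fun j hj => ?_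
        have hj := Nat.lt_succ_iff.1 (mem_range.1 hj)
        gcongr
        exact (div_le_iff₀ (hpos j hj)).2 (hsuper j hj)
    _ = κ * ∑ j ∈ range (m + 1), w j ^ 2 := by rw [mul_sum]

theorem two_mul_sum_mul_succ_le_cos (m : ℕ) (w : ℕ → ℝ) :
    2 * ∑ j ∈ range m, w j * w (j + 1)
      ≤ 2 * cos (π / (m + 2 : ℕ)) * ∑ j ∈ range (m + 1), w j ^ 2 := by
  set θ := π / (m + 2 : ℕ)
  have hθπ : ((m + 2 : ℕ) : ℝ) * θ = π := by simp only [θ]; field_simp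
  refine two_mul_sum_mul_succ_le_of_superharmonic m (fun j => sin (j * θ)) _ (by simp)
    (by rw [hθπ, sin_pi]) (fun j hj => sin_pos_of_pos_of_lt_pi (by positivity) ?_)
    (fun j _ => le_of_eq ?_) w
  · rw [← hθπ]; gcongr; linarith [(Nat.cast_le (α := ℝ)).2 hj]
  · have h1 : ((j : ℕ) : ℝ) * θ = (j + 1 : ℕ) * θ - θ := by push_cast; ring
    have h2 : ((j + 2 : ℕ) : ℝ) * θ = (j + 1 : ℕ) * θ + θ := by push_cast; ring
    simp only [h1, h2, sin_add, sin_sub]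
    ring

theorem neumann_poincare_of_dirichlet (m : ℕ) (κ : ℝ)
    (hdir : ∀ w : ℕ → ℝ, 2 * ∑ j ∈ range m, w j * w (j + 1) ≤ κ * ∑ j ∈ range (m + 1), w j ^ 2)
    (x : ℕ → ℝ) (hx : ∑ j ∈ range (m + 2), x j = 0) :
    (2 - κ) * ∑ j ∈ range (m + 2), x j ^ 2 ≤ ∑ j ∈ range (m + 1), (x (j + 1) - x j) ^ 2 := by
  set P : ℕ → ℝ := fun j => ∑ i ∈ range j, x i
  have hP0 : P 0 = 0 := sum_range_zero x
  have hPlast : P (m + 2) = 0 := hx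
  have hxP : ∀ j, x j = P (j + 1) - P j := fun j => by simp only [P, sum_range_succ]; ring
  set S := ∑ j ∈ range (m + 2), x j ^ 2
  set W := ∑ j ∈ range (m + 1), P (j + 1) ^ 2
  set D := ∑ j ∈ range (m + 1), (x (j + 1) - x j) ^ 2
  have hS_eq : S = 2 * W - 2 * ∑ j ∈ range m, P (j + 1) * P (j + 1 + 1) := by
    have hsq : ∀ j, x j ^ 2 = P (j + 1) ^ 2 + P j ^ 2 - 2 * (P j * P (j + 1)) := fun j => by
      rw [hxP]; ring
    simp only [S, W, hsq, sum_add_distrib, sum_sub_distrib, ← mul_sum]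
    rw [sum_range_succ (fun j => P (j + 1) ^ 2), sum_range_succ' (fun j => P j ^ 2),
      sum_range_succ (fun j => P j * P (j + 1)), sum_range_succ' (fun j => P j * P (j + 1)),
      hP0, hPlast]
    ring
  have hWS : (2 - κ) * W ≤ S := by linarith [hdir fun j => P (j + 1)]
  have hparts : S = -∑ j ∈ range (m + 1), (x (j + 1) - x j) * P (j + 1) := by
    have := sum_range_by_parts x x (m + 2)
    simpa [S, P, sq, hx] using this
  have hCS : S ^ 2 ≤ D * W := by
    rw [hparts, neg_sq]
    exact sum_mul_sq_le_sq_mul_sq _ _ _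
  have hS : 0 ≤ S := sum_nonneg fun j _ => sq_nonneg _
  have hW : 0 ≤ W := sum_nonneg fun j _ => sq_nonneg _
  have hD : 0 ≤ D := sum_nonneg fun j _ => sq_nonneg _
  rcases le_or_gt (2 - κ) 0 with hκ | hκ
  · nlinarith
  have hS2 : (2 - κ) * S ^ 2 ≤ D * S := by
    nlinarith [mul_le_mul_of_nonneg_left hWS hD, mul_le_mul_of_nonneg_left hCS hκ.le]
  rcases hS.eq_or_lt with hS0 | hSpos
  · rw [← hS0, mul_zero]; exact hD
  · nlinarith

section Mean
variable {α : Type*}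

noncomputable def mean (s : Finset α) (g : α → ℝ) : ℝ := (#s : ℝ)⁻¹ * ∑ x ∈ s, g x

theorem sum_sub_mean (s : Finset α) (g : α → ℝ) : ∑ x ∈ s, (g x - mean s g) = 0 := by
  rcases s.eq_empty_or_nonempty with rfl | hs
  · simp
  rw [sum_sub_distrib, sum_const, nsmul_eq_mul, mean,
    mul_inv_cancel_left₀ (by simpa using hs.ne_empty)]
  exact sub_self _

theorem sum_sq_sub_eq_sum_sq_sub_mean_add (s : Finset α) (g : α → ℝ) (c : ℝ) :
    ∑ x ∈ s, (g x - c) ^ 2 = ∑ x ∈ s, (g x - mean s g) ^ 2 + #s * (mean s g - c) ^ 2 := by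
  have hsq : ∀ x, (g x - c) ^ 2
      = (g x - mean s g) ^ 2 + (mean s g - c) ^ 2 + 2 * (mean s g - c) * (g x - mean s g) :=
    fun x => by ring
  simp only [hsq, sum_add_distrib, ← mul_sum, sum_sub_mean, sum_const, nsmul_eq_mul]
  ring

theorem mean_product {β : Type*} (s : Finset α) (t : Finset β) (F : α × β → ℝ) :
    mean (s ×ˢ t) F = mean t fun y => mean s fun x => F (x, y) := by
  simp only [mean, card_product, sum_product_right, ← mul_sum, Nat.cast_mul, mul_inv]
  ring

end Mean

def PoincareInequality {α : Type*} (s : Finset α) (E : (α → ℝ) → ℝ) (c : ℝ) : Prop :=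
  ∀ g : α → ℝ, c * ∑ x ∈ s, (g x - mean s g) ^ 2 ≤ E g

theorem ConvexOn.sum {𝕜 E β ι : Type*} [Semiring 𝕜] [PartialOrder 𝕜] [AddCommMonoid E]
    [AddCommMonoid β] [PartialOrder β] [IsOrderedAddMonoid β] [SMul 𝕜 E] [Module 𝕜 β]
    {s : Set E} (hs : Convex 𝕜 s) (t : Finset ι) {f : ι → E → β}
    (hf : ∀ i ∈ t, ConvexOn 𝕜 s (f i)) : ConvexOn 𝕜 s fun x => ∑ i ∈ t, f i x := by
  classical
  induction t using Finset.induction_on with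
  | empty => simpa using convexOn_const (0 : β) hs
  | insert i t hi ih =>
    simp only [sum_insert hi]
    exact (hf i (mem_insert_self i t)).add (ih fun j hj => hf j (mem_insert_of_mem hj))

theorem sum_Icc_zero_sub_one_eq_sum_range {M : Type*} [AddCommMonoid M] (m : ℕ) (g : ℤ → M) :
    ∑ j ∈ Icc (0 : ℤ) (m - 1), g j = ∑ j ∈ range m, g j := by
  rw [Int.Icc_eq_finset_map, sum_map]
  simp

noncomputable def intervalEnergy (n : ℕ) (g : ℤ → ℝ) : ℝ :=
  ∑ j ∈ Icc (0 : ℤ) (n - 2), (g (j + 1) - g j) ^ 2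

theorem convexOn_intervalEnergy (n : ℕ) : ConvexOn ℝ Set.univ (intervalEnergy n) :=
  ConvexOn.sum convex_univ _ fun j _ => by
    have h := (Even.convexOn_pow (𝕜 := ℝ) even_two).comp_linearMap
      (LinearMap.proj (R := ℝ) (φ := fun _ : ℤ => ℝ) (j + 1) - LinearMap.proj j)
    rwa [Set.preimage_univ] at h

theorem poincareInequality_interval (n : ℕ) (hn : 2 ≤ n) :
    PoincareInequality (Icc (0 : ℤ) (n - 1)) (intervalEnergy n) (2 * (1 - cos (π / n))) := by
  obtain ⟨m, rfl⟩ : ∃ m, n = m + 2 := ⟨n - 2, by omega⟩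
  intro g
  have hcenter := sum_sub_mean (Icc (0 : ℤ) ((m + 2 : ℕ) - 1)) g
  rw [sum_Icc_zero_sub_one_eq_sum_range] at hcenter
  have := neumann_poincare_of_dirichlet m _ (two_mul_sum_mul_succ_le_cos m) _ hcenter
  have h2 : ((m + 2 : ℕ) : ℤ) - 2 = ((m + 1 : ℕ) : ℤ) - 1 := by push_cast; ring
  rw [intervalEnergy, h2, sum_Icc_zero_sub_one_eq_sum_range, sum_Icc_zero_sub_one_eq_sum_range]
  convert this using 2
  · ring
  · push_cast; ring

section Tensorization
variable {α β : Type*} {s : Finset α} {t : Finset β} {Es : (α → ℝ) → ℝ} {Et : (β → ℝ) → ℝ}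

def prodEnergy (s : Finset α) (t : Finset β) (Es : (α → ℝ) → ℝ) (Et : (β → ℝ) → ℝ)
    (F : α × β → ℝ) : ℝ :=
  ∑ y ∈ t, Es (fun x => F (x, y)) + ∑ x ∈ s, Et (fun y => F (x, y))

theorem convexOn_prodEnergy (hEs : ConvexOn ℝ Set.univ Es) (hEt : ConvexOn ℝ Set.univ Et) :
    ConvexOn ℝ Set.univ (prodEnergy s t Es Et) :=
  (ConvexOn.sum convex_univ t fun y _ => hEs.comp_linearMap (LinearMap.funLeft ℝ ℝ (·, y))).add
    (ConvexOn.sum convex_univ s fun x _ => hEt.comp_linearMap (LinearMap.funLeft ℝ ℝ (x, ·)))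

theorem ConvexOn.card_mul_map_mean_le (hE : ConvexOn ℝ Set.univ Et) (hs : s.Nonempty)
    (F : α → β → ℝ) : #s * Et (fun y => mean s fun x => F x y) ≤ ∑ x ∈ s, Et (F x) := by
  have hcard : (#s : ℝ) ≠ 0 := by simpa using hs.ne_empty
  have hJensen := hE.map_sum_le (t := s) (w := fun _ => (#s : ℝ)⁻¹) (p := F)
    (fun _ _ => by positivity) (by simp [hcard]) (fun _ _ => Set.mem_univ _)
  have hmean : (∑ x ∈ s, (#s : ℝ)⁻¹ • F x) = fun y => mean s fun x => F x y := by
    ext y; simp [mean, mul_sum]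
  rw [hmean, ← smul_sum, smul_eq_mul] at hJensen
  rwa [← le_inv_mul_iff₀ (by positivity)]

theorem PoincareInequality.prod {c : ℝ} (hPs : PoincareInequality s Es c)
    (hPt : PoincareInequality t Et c) (hEt : ConvexOn ℝ Set.univ Et) (hs : s.Nonempty) :
    PoincareInequality (s ×ˢ t) (prodEnergy s t Es Et) c := by
  intro F
  set a : β → ℝ := fun y => mean s fun x => F (x, y)
  have hsplit : ∑ p ∈ s ×ˢ t, (F p - mean (s ×ˢ t) F) ^ 2
      = ∑ y ∈ t, ∑ x ∈ s, (F (x, y) - a y) ^ 2 + #s * ∑ y ∈ t, (a y - mean t a) ^ 2 := by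
    rw [sum_product_right, mean_product, mul_sum, ← sum_add_distrib]
    exact sum_congr rfl fun y _ => sum_sq_sub_eq_sum_sq_sub_mean_add s _ _
  have hfibres : c * ∑ y ∈ t, ∑ x ∈ s, (F (x, y) - a y) ^ 2 ≤ ∑ y ∈ t, Es fun x => F (x, y) := by
    rw [mul_sum]; exact sum_le_sum fun y _ => hPs _
  have hmeans : #s * (c * ∑ y ∈ t, (a y - mean t a) ^ 2) ≤ ∑ x ∈ s, Et fun y => F (x, y) :=
    (mul_le_mul_of_nonneg_left (hPt a) (Nat.cast_nonneg _)).trans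
      (hEt.card_mul_map_mean_le hs fun x y => F (x, y))
  rw [hsplit, prodEnergy]
  linarith
end Tensorization

theorem sum_Icc_fin_three {γ M : Type*} [PartialOrder γ] [DecidableEq γ] [LocallyFiniteOrder γ]
    [AddCommMonoid M] (a b : Fin 3 → γ) (G : (Fin 3 → γ) → M) :
    ∑ k ∈ Icc a b, G k
      = ∑ p ∈ Icc (a 0) (b 0) ×ˢ Icc (a 1) (b 1) ×ˢ Icc (a 2) (b 2), G ![p.1, p.2.1, p.2.2] := by
  refine sum_nbij' (fun k => (k 0, k 1, k 2)) (fun p => ![p.1, p.2.1, p.2.2]) ?_ ?_ ?_ ?_ ?_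
  · simp +contextual [Pi.le_def]
  · simp +contextual [Pi.le_def, Fin.forall_fin_succ]
  · intro k _; ext i; fin_cases i <;> rfl
  · simp
  · intro k _; congr; ext i; fin_cases i <;> rfl

theorem filter_Icc_le_eq_Icc_update {ι γ : Type*} [DecidableEq ι] [Fintype ι] [PartialOrder γ]
    [DecidableEq γ] [DecidableLE γ] [LocallyFiniteOrder γ] (a b : ι → γ) (i : ι) (c : γ)
    (hc : c ≤ b i) :
    (Icc a b).filter (fun k => k i ≤ c) = Icc a (Function.update b i c) := by
  ext k
  simp only [mem_filter, mem_Icc, Pi.le_def, Function.update_apply]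
  constructor
  · rintro ⟨⟨hak, hkb⟩, hki⟩
    exact ⟨hak, fun j => by split_ifs with h <;> [exact h ▸ hki; exact hkb j]⟩
  · rintro ⟨hak, hk⟩
    refine ⟨⟨hak, fun j => ?_⟩, by simpa using hk i⟩
    by_cases h : j = i
    · subst h; exact (hk j).trans (by simpa using hc)
    · simpa [h] using hk j

theorem PoincareInequality.cube {α : Type*} {s : Finset α} {E : (α → ℝ) → ℝ} {c : ℝ}
    (hP : PoincareInequality s E c) (hE : ConvexOn ℝ Set.univ E) (hs : s.Nonempty) :
    PoincareInequality (s ×ˢ s ×ˢ s) (prodEnergy s (s ×ˢ s) E (prodEnergy s s E E)) c :=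
  hP.prod (hP.prod hP hE hs) (convexOn_prodEnergy hE hE) hs

theorem prodEnergy_intervalEnergy_cube (n : ℕ) (F : ℤ × ℤ × ℤ → ℝ) :
    prodEnergy (Icc (0 : ℤ) (n - 1)) (Icc (0 : ℤ) (n - 1) ×ˢ Icc (0 : ℤ) (n - 1)) (intervalEnergy n)
        (prodEnergy (Icc (0 : ℤ) (n - 1)) (Icc (0 : ℤ) (n - 1)) (intervalEnergy n)
          (intervalEnergy n)) F
      = ∑ p ∈ Icc (0 : ℤ) (n - 2) ×ˢ Icc (0 : ℤ) (n - 1) ×ˢ Icc (0 : ℤ) (n - 1),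
            (F (p.1 + 1, p.2) - F p) ^ 2
        + ∑ p ∈ Icc (0 : ℤ) (n - 1) ×ˢ Icc (0 : ℤ) (n - 2) ×ˢ Icc (0 : ℤ) (n - 1),
            (F (p.1, p.2.1 + 1, p.2.2) - F p) ^ 2
        + ∑ p ∈ Icc (0 : ℤ) (n - 1) ×ˢ Icc (0 : ℤ) (n - 1) ×ˢ Icc (0 : ℤ) (n - 2),
            (F (p.1, p.2.1, p.2.2 + 1) - F p) ^ 2 := by
  simp only [prodEnergy, intervalEnergy, sum_add_distrib, add_assoc]
  rw [sum_product_right (Icc (0 : ℤ) (n - 2)), sum_product _ (Icc (0 : ℤ) (n - 2) ×ˢ _),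
    sum_product _ (_ ×ˢ Icc (0 : ℤ) (n - 2))]
  simp only [sum_product_right (Icc (0 : ℤ) (n - 2)), sum_product _ (Icc (0 : ℤ) (n - 2))]

/-- Spectral gap of the nearest-neighbour discrete Neumann Laplacian on the `n×n×n` grid:
`Σ_i Σ_{k : k_i ≤ n−2} (f(k+e_i) − f(k))² ≥ 2(1 − cos(π/n)) Σ_k (f(k) − f̄)²`. -/
theorem grid_spectral_gap (n : ℕ) (hn : 2 ≤ n) (f : (Fin 3 → ℤ) → ℝ) :
    (∑ i : Fin 3,
        ∑ k ∈ (Finset.Icc (0 : Fin 3 → ℤ) (fun _ => (n : ℤ) - 1)).filter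
            (fun k => k i ≤ (n : ℤ) - 2),
          (f (fun j => k j + if j = i then 1 else 0) - f k) ^ 2)
      ≥ 2 * (1 - Real.cos (π / n)) *
        ∑ k ∈ Finset.Icc (0 : Fin 3 → ℤ) (fun _ => (n : ℤ) - 1),
          (f k - ((n : ℝ) ^ 3)⁻¹ *
            ∑ k' ∈ Finset.Icc (0 : Fin 3 → ℤ) (fun _ => (n : ℤ) - 1), f k') ^ 2 := by
  set I := Icc (0 : ℤ) (n - 1)
  have hcube := (poincareInequality_interval n hn).cube (convexOn_intervalEnergy n)
    (nonempty_Icc.2 (by omega)) fun p => f ![p.1, p.2.1, p.2.2]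
  have hcard : (#(I ×ˢ I ×ˢ I) : ℝ) = n ^ 3 := by
    simp [I, card_product]; ring
  rw [mean, hcard, prodEnergy_intervalEnergy_cube] at hcube
  have hc : (n : ℤ) - 2 ≤ n - 1 := by omega
  rw [ge_iff_le, Fin.sum_univ_three, filter_Icc_le_eq_Icc_update _ _ (0 : Fin 3) _ hc,
    filter_Icc_le_eq_Icc_update _ _ (1 : Fin 3) _ hc,
    filter_Icc_le_eq_Icc_update _ _ (2 : Fin 3) _ hc]
  have hshift : ∀ a b c : ℤ, (fun j => ![a, b, c] j + if j = 0 then 1 else 0) = ![a + 1, b, c] ∧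
      (fun j => ![a, b, c] j + if j = 1 then 1 else 0) = ![a, b + 1, c] ∧
      (fun j => ![a, b, c] j + if j = 2 then 1 else 0) = ![a, b, c + 1] := by
    intro a b c; refine ⟨?_, ?_, ?_⟩ <;> ext j <;> fin_cases j <;> simp
  simp only [sum_Icc_fin_three, Pi.zero_apply, Function.update_apply, hshift, Fin.isValue,
    Fin.reduceEq, if_true, if_false]
  exact hcube
end

section
/- There exists a constant C > 0 such that for all integers M ≥ 2, m and k with 0 ≤ m ≤ M/2 and 0 ≤ k ≤ M − m − 2, one has Σ_{n=0}^{⌊M/2⌋} dist( (k+1)(m−n) / (M−m), ℤ ) ≥ C · M, where dist(t, ℤ) = min_{j ∈ ℤ} |t − j| is the distance to the nearest integer. -/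
/-!
Write `(k + 1) / (M - m) = a / q` in lowest terms; then `q ≥ 2` and the distance of
`a (m - n) / q` to `ℤ` is at least `|valMinAbs (a (m - n) mod q)| / q`. Along a window of
`L ≤ q` consecutive `n` these residues are distinct, and at most `2T + 1` residues have
`|valMinAbs| ≤ T`, so with `T = L / 4` a window contributes at least `L² / (32 q)`.
For `N = M / 2 + 1 ≤ q` this is already `≥ N / 64` since `q ≤ 2N`; otherwise `[0, N)`
contains `N / q` full windows of length `q`, each contributing at least `q / 32`.
-/

open Finset

namespace ZMod

variable {q : ℕ}

lemma injOn_range_intCast_mul_sub {a : ℤ} (ha : IsUnit (a : ZMod q)) (t : ℤ) {L : ℕ}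
    (hL : L ≤ q) : Set.InjOn (fun n : ℕ => ((a * (t - n) : ℤ) : ZMod q)) (range L) := by
  intro i hi j hj hij
  simp only [coe_range, Set.mem_Iio] at hi hj
  have hij' : (a : ZMod q) * (t - i) = a * (t - j) := by simpa using hij
  have : (i : ZMod q) = j := sub_right_injective (ha.mul_left_cancel hij')
  rwa [natCast_eq_natCast_iff', Nat.mod_eq_of_lt (by omega), Nat.mod_eq_of_lt (by omega)] at this

variable [NeZero q]

lemma card_filter_natAbs_valMinAbs_le (T : ℕ) :
    #{x : ZMod q | x.valMinAbs.natAbs ≤ T} ≤ 2 * T + 1 :=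
  calc #{x : ZMod q | x.valMinAbs.natAbs ≤ T}
      ≤ #(Icc (-T : ℤ) T) :=
        card_le_card_of_injOn valMinAbs
          (fun x hx => by simp only [coe_filter, Set.mem_ofPred_eq] at hx; simp; omega)
          injective_valMinAbs.injOn
    _ = 2 * T + 1 := by simp; omega

lemma sub_mul_le_sum_natAbs_valMinAbs (S : Finset (ZMod q)) (T : ℕ) :
    (#S - (2 * T + 1)) * (T + 1) ≤ ∑ x ∈ S, x.valMinAbs.natAbs := by
  have h_near : #{x ∈ S | x.valMinAbs.natAbs ≤ T} ≤ 2 * T + 1 :=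
    (card_le_card (filter_subset_filter _ (subset_univ S))).trans
      (card_filter_natAbs_valMinAbs_le T)
  have h_split := card_filter_add_card_filter_not (s := S) (fun x => x.valMinAbs.natAbs ≤ T)
  calc (#S - (2 * T + 1)) * (T + 1)
      ≤ #{x ∈ S | ¬x.valMinAbs.natAbs ≤ T} • (T + 1) := by rw [smul_eq_mul]; gcongr; omega
    _ ≤ ∑ x ∈ S with ¬x.valMinAbs.natAbs ≤ T, x.valMinAbs.natAbs :=
        card_nsmul_le_sum _ _ _ fun x hx => Nat.lt_of_not_le (mem_filter.1 hx).2
    _ ≤ ∑ x ∈ S, x.valMinAbs.natAbs := sum_le_sum_of_subset (filter_subset _ S)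

lemma sq_card_le_sum_natAbs_valMinAbs (S : Finset (ZMod q)) (hS : 2 ≤ #S) :
    #S ^ 2 ≤ 32 * ∑ x ∈ S, x.valMinAbs.natAbs := by
  refine le_trans ?_ (Nat.mul_le_mul_left 32 (sub_mul_le_sum_natAbs_valMinAbs S (#S / 4)))
  obtain ⟨T, hT⟩ : ∃ T, #S / 4 = T := ⟨_, rfl⟩
  obtain ⟨s, hs⟩ : ∃ s, #S = 2 * T + 1 + s := ⟨#S - (2 * T + 1), by omega⟩
  have h_lower : 2 * T ≤ s + 1 := by omega
  have h_upper : s ≤ 2 * T + 2 := by omega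
  have h_pos : 1 ≤ s := by omega
  rw [hT, hs, Nat.add_sub_cancel_left]
  nlinarith

lemma natAbs_valMinAbs_div_le_abs_sub_round (z : ℤ) :
    ((z : ZMod q).valMinAbs.natAbs : ℝ) / q ≤ |(z : ℝ) / q - round ((z : ℝ) / q)| := by
  set j := round ((z : ℝ) / q)
  have hq : (0 : ℝ) < q := by exact_mod_cast Nat.pos_of_ne_zero (NeZero.ne q)
  have hmin : (z : ZMod q).valMinAbs.natAbs ≤ (z - j * q).natAbs :=
    natAbs_min_of_le_div_two q _ _ (by simp) (natAbs_valMinAbs_le _)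
  calc ((z : ZMod q).valMinAbs.natAbs : ℝ) / q ≤ ((z - j * q).natAbs : ℝ) / q := by
        gcongr
    _ = |(z : ℝ) / q - j| := by
        rw [Nat.cast_natAbs, Int.cast_abs, ← abs_of_pos hq, ← abs_div, abs_of_pos hq]
        push_cast
        field_simp

end ZMod

section

variable {q : ℕ} [NeZero q] {a : ℤ} (ha : IsUnit (a : ZMod q))
include ha

lemma sq_div_le_sum_range_abs_sub_round (t : ℤ) {L : ℕ} (hL : 2 ≤ L) (hLq : L ≤ q) :
    (L : ℝ) ^ 2 / (32 * q) ≤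
      ∑ n ∈ range L, |((a * (t - n) : ℤ) : ℝ) / q - round (((a * (t - n) : ℤ) : ℝ) / q)| := by
  set e := fun n : ℕ => ((a * (t - n) : ℤ) : ZMod q)
  have hinj := ZMod.injOn_range_intCast_mul_sub ha t hLq
  have hcard : #((range L).image e) = L := by rw [card_image_of_injOn hinj, card_range]
  have hsq : (L : ℝ) ^ 2 ≤ 32 * ∑ n ∈ range L, ((e n).valMinAbs.natAbs : ℝ) := by
    have := ZMod.sq_card_le_sum_natAbs_valMinAbs ((range L).image e) (by rw [hcard]; exact hL)
    rw [hcard, sum_image hinj] at this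
    exact_mod_cast this
  have hq : (0 : ℝ) < q := by exact_mod_cast Nat.pos_of_ne_zero (NeZero.ne q)
  calc (L : ℝ) ^ 2 / (32 * q) ≤ ∑ n ∈ range L, ((e n).valMinAbs.natAbs : ℝ) / q := by
        rw [← sum_div, ← div_div]
        gcongr
        linarith
    _ ≤ _ := sum_le_sum fun n _ => ZMod.natAbs_valMinAbs_div_le_abs_sub_round _

lemma mul_div_le_sum_range_mul_abs_sub_round (hq : 2 ≤ q) (t : ℤ) (K : ℕ) :
    (K * q : ℝ) / 32 ≤
      ∑ n ∈ range (K * q), |((a * (t - n) : ℤ) : ℝ) / q - round (((a * (t - n) : ℤ) : ℝ) / q)| := by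
  induction K with
  | zero => simp
  | succ K ih =>
    have hblock := sq_div_le_sum_range_abs_sub_round ha (t - (K * q : ℕ)) hq le_rfl
    have hq0 : (q : ℝ) ≠ 0 := by positivity
    rw [Nat.succ_mul, sum_range_add]
    simp only [Nat.cast_add, ← sub_sub] at hblock ⊢
    calc _ = (K : ℝ) * q / 32 + (q : ℝ) ^ 2 / (32 * q) := by
          field_simp; push_cast; ring
      _ ≤ _ := add_le_add ih hblock

lemma div_le_sum_range_abs_sub_round (hq : 2 ≤ q) (t : ℤ) {N : ℕ} (hN : 2 ≤ N)
    (hqN : q ≤ 2 * N) :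
    (N : ℝ) / 64 ≤
      ∑ n ∈ range N, |((a * (t - n) : ℤ) : ℝ) / q - round (((a * (t - n) : ℤ) : ℝ) / q)| := by
  rcases le_total N q with hNq | hqN'
  · have hqN_real : (q : ℝ) ≤ 2 * N := by exact_mod_cast hqN
    calc (N : ℝ) / 64 ≤ (N : ℝ) ^ 2 / (32 * q) := by
          rw [div_le_div_iff₀ (by norm_num) (by positivity)]
          nlinarith
      _ ≤ _ := sq_div_le_sum_range_abs_sub_round ha t hN hNq
  · have hK : N ≤ 2 * (N / q * q) := by
      have := Nat.div_add_mod N q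
      have := Nat.mod_lt N (show 0 < q by omega)
      have : q ≤ N / q * q := Nat.le_mul_of_pos_left q (Nat.div_pos hqN' (by omega))
      linarith
    calc (N : ℝ) / 64 ≤ ((N / q : ℕ) * q : ℝ) / 32 := by
          have : (N : ℝ) ≤ 2 * ((N / q : ℕ) * q) := by exact_mod_cast hK
          linarith
      _ ≤ _ := mul_div_le_sum_range_mul_abs_sub_round ha hq t (N / q)
      _ ≤ _ := sum_le_sum_of_subset_of_nonneg (range_subset_range.2 (Nat.div_mul_le_self N q))
          fun _ _ _ => abs_nonneg _

end

lemma exists_isUnit_div_eq_div (b c : ℕ) (hb : 0 < b) (hbc : b < c) :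
    ∃ (a : ℤ) (q : ℕ), 2 ≤ q ∧ q ≤ c ∧ IsUnit (a : ZMod q) ∧ (b : ℝ) / c = a / q := by
  set r : ℚ := b / c
  have hden_dvd : (r.den : ℤ) ∣ c := by
    simpa [r, Rat.divInt_eq_div] using Rat.den_dvd b c
  have hden_ne_one : r.den ≠ 1 := by
    rw [Ne, Rat.den_div_natCast_eq_one_iff b c (by omega)]
    exact fun h => absurd (Nat.le_of_dvd hb h) (by omega)
  refine ⟨r.num, r.den, ?_, ?_, ?_, ?_⟩
  · have := r.den_pos
    omega
  · exact_mod_cast Int.le_of_dvd (by omega) hden_dvd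
  · exact (ZMod.coe_int_isUnit_iff_isCoprime _ _).2
      (Int.isCoprime_iff_nat_coprime.2 (by simpa using r.reduced.symm))
  · rw [← Rat.cast_def]
    push_cast [r]
    rfl

/-- Equidistribution-type bound: there is `C > 0` such that for all integers `M ≥ 2`,
`0 ≤ m ≤ M/2` and `0 ≤ k ≤ M − m − 2`,
`Σ_{n=0}^{⌊M/2⌋} dist((k+1)(m−n)/(M−m), ℤ) ≥ C M`. -/
theorem distance_sum_lower_bound :
    ∃ C > (0 : ℝ), ∀ M m k : ℕ, 2 ≤ M → 2 * m ≤ M → k + m + 2 ≤ M →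
      (∑ n ∈ Finset.range (M / 2 + 1),
          |((k : ℝ) + 1) * ((m : ℝ) - (n : ℝ)) / ((M : ℝ) - (m : ℝ)) -
            round (((k : ℝ) + 1) * ((m : ℝ) - (n : ℝ)) / ((M : ℝ) - (m : ℝ)))|)
        ≥ C * M := by
  refine ⟨1 / 128, by norm_num, fun M m k hM hm hk => ?_⟩
  obtain ⟨a, q, hq, hqM, ha, hfrac⟩ :=
    exists_isUnit_div_eq_div (k + 1) (M - m) (by omega) (by omega)
  have : NeZero q := ⟨by omega⟩
  push_cast [Nat.cast_sub (show m ≤ M by omega)] at hfrac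
  have hterm : ∀ n : ℕ, ((k : ℝ) + 1) * ((m : ℝ) - n) / ((M : ℝ) - m) =
      ((a * ((m : ℤ) - n) : ℤ) : ℝ) / q := fun n => by
    rw [mul_comm, mul_div_assoc, hfrac]
    push_cast
    ring
  simp only [hterm]
  have hsum := div_le_sum_range_abs_sub_round ha hq m (N := M / 2 + 1) (by omega) (by omega)
  have hM : (M : ℝ) ≤ 2 * ((M / 2 + 1 : ℕ) : ℝ) := by exact_mod_cast (by omega : M ≤ 2 * (M / 2 + 1))
  linarith
end

section
/- There exists a constant C > 0 such that the following holds. Let ℓ > 0 with ℓ⁻¹ ∈ ℕ, let m be an integer with 0 ≤ m ≤ 1/(2ℓ), and let k ∈ {0,…,ℓ_m⁻¹−1}³ with k₁ + 1 ≤ ℓ_m⁻¹ − 1. Then Σ_{n=0}^{⌊1/(2ℓ)⌋} Σ_{s' ∈ {0,…,ℓ_n⁻¹−1}³} |B_{ℓ_m,k} ∩ B_{ℓ_n,s'}| · |B_{ℓ_m,k+e₁} ∩ B_{ℓ_n,s'}| / (ℓ_m³ ℓ_n³) ≥ C ℓ⁻¹, where e₁ = (1,0,0) and |·| denotes Lebesgue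 measure. (Lower bound on the nearest-neighbour edge weight of the discrete operator L(ℓ_m) arising from the family of partitions.) -/
open MeasureTheory Real

open Finset

/-!
Of the cubes `B (ℓ_n) s'` keep, for each `n`, only the one containing the centre of the face
shared by `B (ℓ_m) k` and `B (ℓ_m) (k + e₀)`. As `ℓ_m ≤ 2 ℓ_n` and `ℓ_n ≤ 2 ℓ_m`, it meets the two
cubes in boxes of side `ℓ_m / 2` parallel to the face and of widths `θ ℓ_m / 2`, `(1 - θ) ℓ_m / 2`
across it, where `θ` is the fractional part of `(k 0 + 1) ℓ_m / ℓ_n = (k 0 + 1) N / A` with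
`A = ℓ⁻¹ - m`, `N = ℓ⁻¹ - n`. So the `n`-th term is at least `θ (1 - θ) / 512`.

Write `(k 0 + 1) / A = q / D` in lowest terms, `D ≥ 2`. Over the `R = ⌊1/(2ℓ)⌋ + 1 ≥ D / 2`
consecutive values of `N`, each residue of `q N` modulo `D` occurs at most `(R - 1) / D + 1` times,
so at least `R / 4` of them stay at distance `≥ D / 16` from `0`, and there `θ (1 - θ) ≥ 1 / 32`.
-/

theorem volume_B_inter_toReal (a b : ℝ) (k s : Fin 3 → ℕ) :
    (volume (B a k ∩ B b s)).toReal =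
      ∏ i, (volume (Set.Icc ((k i : ℝ) * a) ((k i + 1) * a) ∩
        Set.Icc ((s i : ℝ) * b) ((s i + 1) * b))).toReal := by
  rw [B, B, ← Set.pi_univ_Icc, ← Set.pi_univ_Icc, ← Set.pi_inter_distrib, volume_pi_pi,
    ENNReal.toReal_prod]

theorem le_volume_Icc_inter_Icc_toReal {lo hi lo' hi' x δ : ℝ} (hlo : lo ≤ x)
    (hlo' : lo' ≤ x) (hhi : x + δ ≤ hi) (hhi' : x + δ ≤ hi') :
    δ ≤ (volume (Set.Icc lo hi ∩ Set.Icc lo' hi')).toReal := by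
  rw [Set.Icc_inter_Icc, Real.volume_Icc, ENNReal.toReal_ofReal']
  refine le_max_of_le_left ?_
  have := le_min hhi hhi'
  have := max_le hlo hlo'
  linarith

theorem natFloor_div_mul_eq_sub_fract_div_mul {p b : ℝ} (hp : 0 ≤ p) (hb : 0 < b) :
    (⌊p / b⌋₊ : ℝ) * b = p - Int.fract (p / b) * b := by
  rw [← Int.self_sub_floor, natCast_floor_eq_intCast_floor (by positivity)]
  field_simp
  ring

theorem div_two_le_volume_inter_cell_of_midpoint {a b : ℝ} (ha : 0 < a) (hab : a ≤ 2 * b) (j : ℕ) :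
    a / 2 ≤ (volume (Set.Icc ((j : ℝ) * a) ((j + 1) * a) ∩
      Set.Icc (⌊(j + 1 / 2) * a / b⌋₊ * b) ((⌊(j + 1 / 2) * a / b⌋₊ + 1) * b))).toReal := by
  have hb : 0 < b := by linarith
  have hs := natFloor_div_mul_eq_sub_fract_div_mul (p := (j + 1 / 2) * a) (by positivity) hb
  set s : ℝ := ((⌊(j + 1 / 2) * a / b⌋₊ : ℕ) : ℝ)
  set θ := Int.fract ((j + 1 / 2) * a / b)
  have hθb : θ * b < b := mul_lt_of_lt_one_left hb (Int.fract_lt_one _)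
  have hθb' : 0 ≤ θ * b := mul_nonneg (Int.fract_nonneg _) hb.le
  refine le_volume_Icc_inter_Icc_toReal (x := max (j * a) (s * b)) (le_max_left _ _)
    (le_max_right _ _) ?_ ?_ <;>
  · rw [← max_add_add_right]; exact max_le (by linarith) (by linarith)

theorem fract_mul_div_two_le_volume_inter_cell {a b : ℝ} (ha : 0 < a) (hab : a ≤ 2 * b) (j : ℕ) :
    Int.fract ((j + 1) * a / b) * (a / 2) ≤ (volume (Set.Icc ((j : ℝ) * a) ((j + 1) * a) ∩
      Set.Icc (⌊(j + 1) * a / b⌋₊ * b) ((⌊(j + 1) * a / b⌋₊ + 1) * b))).toReal := by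
  have hb : 0 < b := by linarith
  have hs := natFloor_div_mul_eq_sub_fract_div_mul (p := (j + 1) * a) (by positivity) hb
  set s : ℝ := ((⌊(j + 1) * a / b⌋₊ : ℕ) : ℝ)
  set θ := Int.fract ((j + 1) * a / b)
  have hθ0 := Int.fract_nonneg ((j + 1) * a / b)
  have hθ1 := Int.fract_lt_one ((j + 1) * a / b)
  have hθa : θ * a ≤ a := mul_le_of_le_one_left ha.le hθ1.le
  have hθab : θ * a ≤ θ * (2 * b) := mul_le_mul_of_nonneg_left hab hθ0
  have hθb : θ * b ≤ b := mul_le_of_le_one_left hb.le hθ1.le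
  refine le_volume_Icc_inter_Icc_toReal (x := (j + 1) * a - θ * (a / 2)) ?_ ?_ ?_ ?_ <;> linarith

theorem one_sub_fract_mul_div_two_le_volume_inter_cell {a b : ℝ} (ha : 0 < a) (hab : a ≤ 2 * b)
    (j : ℕ) :
    (1 - Int.fract ((j + 1) * a / b)) * (a / 2) ≤
      (volume (Set.Icc (((j : ℝ) + 1) * a) ((j + 1 + 1) * a) ∩
        Set.Icc (⌊(j + 1) * a / b⌋₊ * b) ((⌊(j + 1) * a / b⌋₊ + 1) * b))).toReal := by
  have hb : 0 < b := by linarith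
  have hs := natFloor_div_mul_eq_sub_fract_div_mul (p := (j + 1) * a) (by positivity) hb
  set s : ℝ := ((⌊(j + 1) * a / b⌋₊ : ℕ) : ℝ)
  set θ := Int.fract ((j + 1) * a / b)
  have hθ0 := Int.fract_nonneg ((j + 1) * a / b)
  have hθ1 := Int.fract_lt_one ((j + 1) * a / b)
  have hθa : (1 - θ) * a ≤ a := mul_le_of_le_one_left ha.le (by linarith)
  have hθab : (1 - θ) * a ≤ (1 - θ) * (2 * b) := mul_le_mul_of_nonneg_left hab (by linarith)
  have hθb : 0 ≤ θ * b := mul_nonneg hθ0 hb.le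
  refine le_volume_Icc_inter_Icc_toReal (x := (j + 1) * a) ?_ ?_ ?_ ?_ <;> linarith

-- the centre of the face shared by `B a k` and `B a (k + e₀)`
noncomputable def faceCentre (a : ℝ) (k : Fin 3 → ℕ) : Fin 3 → ℝ :=
  fun i => (k i + if i = 0 then 1 else 1 / 2) * a

noncomputable def gridIndex (b : ℝ) (p : Fin 3 → ℝ) : Fin 3 → ℕ :=
  fun i => ⌊p i / b⌋₊

theorem fract_mul_one_sub_fract_mul_le_volume_inter_mul {a b : ℝ} (ha : 0 < a)
    (hab : a ≤ 2 * b) (k : Fin 3 → ℕ) :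
    Int.fract ((k 0 + 1) * a / b) * (1 - Int.fract ((k 0 + 1) * a / b)) * (a / 2) ^ 6 ≤
      (volume (B a k ∩ B b (gridIndex b (faceCentre a k)))).toReal *
        (volume (B a (fun i => k i + if i = 0 then 1 else 0) ∩
          B b (gridIndex b (faceCentre a k)))).toReal := by
  have hl := fract_mul_div_two_le_volume_inter_cell ha hab (k 0)
  have hr := one_sub_fract_mul_div_two_le_volume_inter_cell ha hab (k 0)
  have h1 := div_two_le_volume_inter_cell_of_midpoint ha hab (k 1)
  have h2 := div_two_le_volume_inter_cell_of_midpoint ha hab (k 2)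
  have hθ : 0 ≤ 1 - Int.fract ((k 0 + 1) * a / b) := sub_nonneg.2 (Int.fract_lt_one _).le
  rw [volume_B_inter_toReal, volume_B_inter_toReal, Fin.prod_univ_three, Fin.prod_univ_three]
  simp only [gridIndex, faceCentre, if_pos, if_neg (show (1 : Fin 3) ≠ 0 by decide),
    if_neg (show (2 : Fin 3) ≠ 0 by decide), add_zero, Nat.cast_add, Nat.cast_one]
  calc _ = (Int.fract ((k 0 + 1) * a / b) * (a / 2) * (a / 2) * (a / 2)) *
        ((1 - Int.fract ((k 0 + 1) * a / b)) * (a / 2) * (a / 2) * (a / 2)) := by ring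
    _ ≤ _ := by gcongr

theorem fract_mul_one_sub_fract_div_le_volume_inter_mul_div {a b : ℝ} (ha : 0 < a) (hab : a ≤ 2 * b)
    (hba : b ≤ 2 * a) (k : Fin 3 → ℕ) :
    Int.fract ((k 0 + 1) * a / b) * (1 - Int.fract ((k 0 + 1) * a / b)) / 512 ≤
      (volume (B a k ∩ B b (gridIndex b (faceCentre a k)))).toReal *
        (volume (B a (fun i => k i + if i = 0 then 1 else 0) ∩
          B b (gridIndex b (faceCentre a k)))).toReal / (a ^ 3 * b ^ 3) := by
  have hb : 0 < b := by linarith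
  rw [le_div_iff₀ (by positivity)]
  refine le_trans ?_ (fract_mul_one_sub_fract_mul_le_volume_inter_mul ha hab k)
  have hθ : 0 ≤ 1 - Int.fract ((k 0 + 1) * a / b) := sub_nonneg.2 (Int.fract_lt_one _).le
  calc _ = Int.fract ((k 0 + 1) * a / b) * (1 - Int.fract ((k 0 + 1) * a / b)) *
        (a ^ 3 * b ^ 3 / 512) := by ring
    _ ≤ Int.fract ((k 0 + 1) * a / b) * (1 - Int.fract ((k 0 + 1) * a / b)) *
        (a ^ 3 * (2 * a) ^ 3 / 512) := by gcongr
    _ = _ := by ring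

theorem fract_mul_one_sub_fract_div_le_sum {A N : ℕ} (hA : 0 < A) (hNA : N ≤ 2 * A)
    (hAN : A ≤ 2 * N) (k : Fin 3 → ℕ) (hk : ∀ i, k i < A) (hk0 : k 0 + 1 < A) :
    Int.fract (((k 0 + 1) * N : ℕ) / A : ℝ) * (1 - Int.fract (((k 0 + 1) * N : ℕ) / A : ℝ)) / 512 ≤
      ∑ s ∈ Fintype.piFinset (fun _ : Fin 3 => range N),
        (volume (B (A : ℝ)⁻¹ k ∩ B (N : ℝ)⁻¹ s)).toReal *
          (volume (B (A : ℝ)⁻¹ (fun i => k i + if i = 0 then 1 else 0) ∩ B (N : ℝ)⁻¹ s)).toReal /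
          (((A : ℝ)⁻¹) ^ 3 * ((N : ℝ)⁻¹) ^ 3) := by
  have hN : 0 < N := by omega
  have hAR : (0 : ℝ) < A := by exact_mod_cast hA
  have hNR : (0 : ℝ) < N := by exact_mod_cast hN
  have hcell : gridIndex (N : ℝ)⁻¹ (faceCentre (A : ℝ)⁻¹ k) ∈
      Fintype.piFinset (fun _ : Fin 3 => range N) := by
    simp only [Fintype.mem_piFinset, mem_range, gridIndex, faceCentre]
    intro i
    rw [Nat.floor_lt (by positivity), div_inv_eq_mul, mul_right_comm, ← div_eq_mul_inv,
      div_lt_iff₀ hAR, mul_comm]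
    gcongr
    have : (k i : ℝ) + 1 ≤ A := by exact_mod_cast hk i
    have : (k 0 : ℝ) + 1 < A := by exact_mod_cast hk0
    split_ifs with h
    · subst h; assumption
    · linarith
  have hfract : (((k 0 + 1) * N : ℕ) / A : ℝ) = (k 0 + 1) * (A : ℝ)⁻¹ / (N : ℝ)⁻¹ := by
    push_cast; field_simp
  rw [hfract]
  refine le_trans ?_ (single_le_sum (fun s _ => by positivity) hcell)
  exact fract_mul_one_sub_fract_div_le_volume_inter_mul_div (by positivity)
    (by field_simp; exact_mod_cast (by omega : N ≤ A * 2))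
    (by field_simp; exact_mod_cast (by omega : A ≤ N * 2)) k

theorem card_le_of_forall_modEq {S : Finset ℕ} {D R : ℕ} (hS : S ⊆ range R)
    (hmod : ∀ x ∈ S, ∀ y ∈ S, x ≡ y [MOD D]) : #S ≤ (R - 1) / D + 1 := by
  simpa using card_le_card_of_injOn (· / D) (t := range ((R - 1) / D + 1))
    (fun x hx => mem_range.2 <| Nat.lt_succ_of_le <|
      Nat.div_le_div_right <| Nat.le_sub_one_of_lt <| mem_range.1 (hS hx))
    (fun x hx y hy hxy => by
      rw [← Nat.div_add_mod x D, ← Nat.div_add_mod y D, show x / D = y / D from hxy,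
        hmod x hx y hy])

theorem mul_card_sub_le_sum {ι β : Type*} [DecidableEq β] {s : Finset ι} {f : ι → ℝ}
    {j : ι → β} {bad : Finset β} {c : ℕ} {t : ℝ} (ht : 0 ≤ t) (hf : ∀ i ∈ s, 0 ≤ f i)
    (hgood : ∀ i ∈ s, j i ∉ bad → t ≤ f i) (hfib : ∀ b ∈ bad, #{i ∈ s | j i = b} ≤ c) :
    t * (#s - #bad * c) ≤ ∑ i ∈ s, f i := by
  have hbad : #{i ∈ s | j i ∈ bad} ≤ c * #bad :=
    card_le_mul_card_image_of_maps_to (fun i hi => (mem_filter.1 hi).2) c fun b hb =>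
      (card_le_card fun i hi => by simp_all).trans (hfib b hb)
  have hsplit := card_filter_add_card_filter_not (s := s) (fun i => j i ∈ bad)
  have hcount : (#s : ℝ) - #bad * c ≤ #{i ∈ s | j i ∉ bad} := by
    have : (#{i ∈ s | j i ∈ bad} : ℝ) ≤ c * #bad := by exact_mod_cast hbad
    have : (#{i ∈ s | j i ∈ bad} : ℝ) + #{i ∈ s | j i ∉ bad} = #s := by exact_mod_cast hsplit
    linarith
  calc t * (#s - #bad * c) ≤ ∑ _i ∈ {i ∈ s | j i ∉ bad}, t := by
        rw [sum_const, nsmul_eq_mul, mul_comm]; gcongr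
    _ ≤ ∑ i ∈ s with j i ∉ bad, f i := sum_le_sum fun i hi => by
        rw [mem_filter] at hi; exact hgood i hi.1 hi.2
    _ ≤ ∑ i ∈ s, f i := sum_le_sum_of_subset_of_nonneg (filter_subset _ _) fun i hi _ => hf i hi

def nearZero (D v : ℕ) : Finset ℕ :=
  range v ∪ Ioo (D - v) D

theorem card_nearZero_le (D v : ℕ) : #(nearZero D v) ≤ 2 * v - 1 :=
  (card_union_le _ _).trans (by rw [card_range, Nat.card_Ioo]; omega)

theorem le_div_mul_one_sub_div_of_notMem_nearZero {D v r : ℕ} (hr : r < D)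
    (h : r ∉ nearZero D v) : (v : ℝ) / (2 * D) ≤ r / D * (1 - r / D) := by
  simp only [nearZero, mem_union, mem_range, mem_Ioo, not_or, not_lt, not_and] at h
  have hD : (0 : ℝ) < D := by exact_mod_cast (Nat.zero_lt_of_lt hr)
  have hvr : (v : ℝ) ≤ r := by exact_mod_cast h.1
  have hvr' : (v : ℝ) ≤ D - r := by
    rw [le_sub_iff_add_le]; exact_mod_cast (by omega : v + r ≤ D)
  rw [div_mul_eq_mul_div, one_sub_div hD.ne', mul_div_assoc', div_div,
    div_le_div_iff₀ (by positivity) (by positivity)]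
  -- `2 r (D - r) ≥ v (D - r) + r v = v D`
  nlinarith [mul_le_mul_of_nonneg_right hvr ((Nat.cast_nonneg v).trans hvr'),
    mul_le_mul_of_nonneg_left hvr' (Nat.cast_nonneg r)]

theorem exists_four_mul_card_nearZero_mul_le {D R : ℕ} (hD : 2 ≤ D) (hR : 2 ≤ R)
    (hDR : D ≤ 2 * R) : ∃ v, D ≤ 16 * v ∧ 4 * (#(nearZero D v) * ((R - 1) / D + 1)) ≤ 3 * R := by
  suffices ∃ v, 1 ≤ v ∧ D ≤ 16 * v ∧ 4 * ((2 * v - 1) * ((R - 1) / D + 1)) ≤ 3 * R by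
    obtain ⟨v, -, hvD, hv⟩ := this
    exact ⟨v, hvD, le_trans (by gcongr; exact card_nearZero_le D v) hv⟩
  rcases lt_or_ge D 8 with hD8 | hD8
  · have := Nat.div_le_div_left (a := R - 1) hD (by norm_num)
    exact ⟨1, le_rfl, by omega, by omega⟩
  · have hX := Nat.mul_div_le (R - 1) D
    have h8 := Nat.mul_le_mul_right ((R - 1) / D) (Nat.div_mul_le_self D 8)
    refine ⟨D / 8, by omega, by omega, ?_⟩
    calc 4 * ((2 * (D / 8) - 1) * ((R - 1) / D + 1))
        ≤ 4 * ((2 * (D / 8)) * ((R - 1) / D + 1)) := by gcongr; omega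
      _ = D / 8 * 8 * ((R - 1) / D) + D / 8 * 8 := by ring
      _ ≤ 3 * R := by have := Nat.div_mul_le_self D 8; omega

theorem le_sum_fract_mul_one_sub_fract_of_coprime {q D : ℕ} (hqD : q.Coprime D) (hD : 2 ≤ D)
    {R : ℕ} (hR : 2 ≤ R) (hDR : D ≤ 2 * R) (L : ℕ) :
    (R : ℝ) / 128 ≤ ∑ n ∈ range R,
      Int.fract ((q * (L + n) : ℕ) / D : ℝ) * (1 - Int.fract ((q * (L + n) : ℕ) / D : ℝ)) := by
  simp only [Int.fract_div_natCast_eq_div_natCast_mod]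
  have hfib : ∀ r, #{n ∈ range R | q * (L + n) % D = r} ≤ (R - 1) / D + 1 := fun r =>
    card_le_of_forall_modEq (filter_subset _ _) fun x hx y hy =>
      Nat.ModEq.add_left_cancel' L <| Nat.ModEq.cancel_left_of_coprime
        (Nat.coprime_comm.1 hqD) <| ((mem_filter.1 hx).2.trans (mem_filter.1 hy).2.symm)
  obtain ⟨v, hvD, hcount⟩ := exists_four_mul_card_nearZero_mul_le hD hR hDR
  have hres : ∀ n, q * (L + n) % D < D := fun n => Nat.mod_lt _ (by omega)
  calc (R : ℝ) / 128
      ≤ 1 / 32 * (#(range R) - #(nearZero D v) * (((R - 1) / D + 1 : ℕ) : ℝ)) := by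
        have : 4 * ((#(nearZero D v) : ℝ) * ((R - 1) / D + 1 : ℕ)) ≤ 3 * R := by
          exact_mod_cast hcount
        rw [card_range]
        linarith
    _ ≤ _ := by
        refine mul_card_sub_le_sum (by norm_num) (fun n _ => ?_) (fun n _ hn => ?_)
          fun r _ => hfib r
        · simpa [nearZero] using le_div_mul_one_sub_div_of_notMem_nearZero (v := 0) (hres n)
        · refine le_trans ?_ (le_div_mul_one_sub_div_of_notMem_nearZero (hres n) hn)
          have : (D : ℝ) ≤ 16 * v := by exact_mod_cast hvD
          rw [div_le_div_iff₀ (by norm_num) (by positivity)]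
          linarith

theorem le_sum_fract_mul_one_sub_fract {q A : ℕ} (hA : 0 < A) (hqA : ¬A ∣ q) {R : ℕ}
    (hR : 2 ≤ R) (hAR : A ≤ 2 * R) (L : ℕ) :
    (R : ℝ) / 128 ≤ ∑ n ∈ range R,
      Int.fract ((q * (L + n) : ℕ) / A : ℝ) * (1 - Int.fract ((q * (L + n) : ℕ) / A : ℝ)) := by
  have hgq : q.gcd A ∣ q := Nat.gcd_dvd_left q A
  have hgA : q.gcd A ∣ A := Nat.gcd_dvd_right q A
  have hg : 0 < q.gcd A := Nat.gcd_pos_of_pos_right q hA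
  set g := q.gcd A
  have hAg : A / g * g = A := Nat.div_mul_cancel hgA
  have hD : 2 ≤ A / g := by
    by_contra h
    have : A / g = 1 := by have := Nat.div_pos (Nat.le_of_dvd hA hgA) hg; omega
    exact hqA (by rw [← hAg, this, one_mul]; exact hgq)
  have hcross : q * (A / g) = q / g * A := by
    calc q * (A / g) = q / g * g * (A / g) := by rw [Nat.div_mul_cancel hgq]
      _ = q / g * (A / g * g) := by ring
      _ = q / g * A := by rw [hAg]
  have hred : ∀ n, ((q * (L + n) : ℕ) : ℝ) / A = ((q / g * (L + n) : ℕ) : ℝ) / (A / g : ℕ) := by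
    intro n
    rw [div_eq_div_iff (by positivity) (by positivity)]
    exact_mod_cast (by rw [mul_right_comm, hcross]; ring :
      q * (L + n) * (A / g) = q / g * (L + n) * A)
  simp only [hred]
  exact le_sum_fract_mul_one_sub_fract_of_coprime (Nat.coprime_div_gcd_div_gcd hg) hD hR
    ((Nat.div_le_self _ _).trans hAR) L

theorem inv_div_one_sub_mul_inv {M n : ℕ} (h : n < M) :
    (M : ℝ)⁻¹ / (1 - n * (M : ℝ)⁻¹) = ((M - n : ℕ) : ℝ)⁻¹ := by
  have hM : (M : ℝ) ≠ 0 := by exact_mod_cast (Nat.zero_lt_of_lt h).ne'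
  rw [Nat.cast_sub h.le, ← div_eq_mul_inv, one_sub_div hM, div_div_eq_mul_div,
    inv_mul_cancel₀ hM, one_div]

/-- Lower bound on the nearest-neighbour edge weight of the discrete operator `L(ℓ_m)`
arising from the family of partitions with side lengths `ℓ_n = ℓ/(1 − nℓ)`:
`Σ_{n=0}^{⌊1/(2ℓ)⌋} Σ_{s'} |B_{ℓ_m,k} ∩ B_{ℓ_n,s'}||B_{ℓ_m,k+e₁} ∩ B_{ℓ_n,s'}|/(ℓ_m³ ℓ_n³)
 ≥ C ℓ⁻¹`. -/
theorem nearest_neighbour_weight_lower_bound :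
    ∃ C > (0 : ℝ), ∀ (M : ℕ) (ℓ : ℝ), 0 < M → ℓ = (M : ℝ)⁻¹ →
      ∀ m : ℕ, 2 * m ≤ M →
      ∀ k : Fin 3 → ℕ, (∀ i, k i < M - m) → k 0 + 1 ≤ M - m - 1 →
      (∑ n ∈ Finset.range (M / 2 + 1),
          ∑ s' ∈ Fintype.piFinset (fun _ : Fin 3 => Finset.range (M - n)),
            (volume (B (ℓ / (1 - (m : ℝ) * ℓ)) k ∩ B (ℓ / (1 - (n : ℝ) * ℓ)) s')).toReal *
              (volume (B (ℓ / (1 - (m : ℝ) * ℓ)) (fun i => k i + if i = 0 then 1 else 0) ∩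
                B (ℓ / (1 - (n : ℝ) * ℓ)) s')).toReal /
              ((ℓ / (1 - (m : ℝ) * ℓ)) ^ 3 * (ℓ / (1 - (n : ℝ) * ℓ)) ^ 3))
        ≥ C * ℓ⁻¹ := by
  refine ⟨1 / 131072, by norm_num, ?_⟩
  rintro M ℓ hM rfl m hm k hk hk0
  rw [inv_div_one_sub_mul_inv (by omega : m < M), inv_inv, ge_iff_le]
  set F : ℕ → ℝ := fun N => Int.fract (((k 0 + 1) * N : ℕ) / (M - m : ℕ) : ℝ) *
    (1 - Int.fract (((k 0 + 1) * N : ℕ) / (M - m : ℕ) : ℝ))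
  have hreflect : ∑ n ∈ range (M / 2 + 1), F (M - M / 2 + n) =
      ∑ n ∈ range (M / 2 + 1), F (M - n) := by
    rw [← sum_range_reflect]
    exact sum_congr rfl fun n hn => congrArg F (by rw [mem_range] at hn; omega)
  calc 1 / 131072 * (M : ℝ) ≤ ((M / 2 + 1 : ℕ) : ℝ) / 128 / 512 := by
        have : (M : ℝ) ≤ 2 * ((M / 2 + 1 : ℕ) : ℝ) := by
          exact_mod_cast (by omega : M ≤ 2 * (M / 2 + 1))
        linarith
    _ ≤ (∑ n ∈ range (M / 2 + 1), F (M - M / 2 + n)) / 512 := by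
        gcongr
        exact le_sum_fract_mul_one_sub_fract (by omega)
          (Nat.not_dvd_of_pos_of_lt (by omega) (by omega)) (by omega) (by omega) _
    _ = ∑ n ∈ range (M / 2 + 1), F (M - n) / 512 := by rw [hreflect, sum_div]
    _ ≤ _ := sum_le_sum fun n hn => by
        rw [mem_range] at hn
        rw [inv_div_one_sub_mul_inv (by omega : n < M)]
        exact fract_mul_one_sub_fract_div_le_sum (by omega) (by omega) (by omega) k hk
          (by omega)
end
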